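/- arXiv:2207.03403 — 4 statements merged into one kernel-verified Lean document; each statement's English description precedes it below -/
import Mathlib

section
/- Consider the elementary link MDP with success probability p ∈ (0,1), maximum storage time m* ∈ ℕ, and a decision function d; write α(m) := d(m)(0) and ᾱ(m) := 1 − α(m) for m ∈ {−1,0,…,m*}. Then for every initial distribution of M(1) and every function f : {−1,0,…,m*} → ℝ with f(−1) = 0, the limit lim_{t→∞} F̃^{(d,d,…)}(t) exists and equals ∑_{m=0}^{m*} f(m)·s_d(m), where N_d := 1 − p(1 − ∏_{m′=0}^{m*} α(m′)) + p·ᾱ(−1)·(1 + ∑_{m=1}^{m*} ∏_{m′=0}^{m−1} α(m′)), s_d(−1) := (1 − p(1 − ∏_{m′=0}^{m*} α(m′)))/N_d, s_d(0) := p·ᾱ(−1)/N_d, and s_d(m) := p·ᾱ(−1)·(∏_{m′=0}^{m−1} α(m′))/N_d for 1 ≤ m ≤ m*. -/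
/-!
Under `P^d` every state reaches `-1` within `m* + 1` steps with probability at least
`(1 - p)^(m* + 1)`: waiting carries the link up to `m*` and then to `-1`, and a request fails
with probability `1 - p`. This Doeblin minorization makes `(P^d)^(m* + 1)` a strict contraction
in `ℓ¹` on vectors of total mass zero, so the law of `M(t)` converges geometrically to every
stationary distribution of the same mass. The balance equations show that `s_d` is one; the key
identity is that the request outflow `∑ (1 - α) s_d` equals `(1 - α(-1)) / N_d`, by telescoping
the products `∏ α`.
-/

open BigOperators Filter

noncomputable section

/-- Transition matrix `T⁰` of the "wait" action on the state set `{-1, 0, …, m*}`: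
it fixes `-1`, sends `m` to `m+1` for `0 ≤ m ≤ m*-1`, and sends `m*` to `-1`. -/
def T0 (mstar : ℕ) : ℤ → ℤ → ℝ := fun s' s =>
  if s = -1 then (if s' = -1 then 1 else 0)
  else if s = (mstar : ℤ) then (if s' = -1 then 1 else 0)
  else if s' = s + 1 then 1 else 0

/-- Transition matrix `T¹` of the "request" action: every state goes to `-1` with
probability `1-p` and to `0` with probability `p`. -/
def T1 (p : ℝ) : ℤ → ℤ → ℝ := fun s' _ =>
  if s' = -1 then 1 - p else if s' = 0 then p else 0

/-- The transition matrix `P^d` induced by the decision function with wait-probability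
`α s = d(s)(0)` and request-probability `1 - α s = d(s)(1)`. -/
def Pd (mstar : ℕ) (p : ℝ) (α : ℤ → ℝ) : ℤ → ℤ → ℝ := fun s' s =>
  T0 mstar s' s * α s + T1 p s' s * (1 - α s)

/-- The distribution of the Markov chain `(M(t))` under the stationary policy `(d, d, …)`;
time `0` carries the initial distribution `μ0` of `M(1)`. -/
def chainDist (mstar : ℕ) (p : ℝ) (α : ℤ → ℝ) (μ0 : ℤ → ℝ) : ℕ → ℤ → ℝ
  | 0 => μ0
  | (t + 1) => fun s' =>
      ∑ s ∈ Finset.Icc (-1 : ℤ) (mstar : ℤ), Pd mstar p α s' s * chainDist mstar p α μ0 t s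

/-- The expected link value `F̃^{(d,d,…)}(t) = ∑_{m=0}^{m*} f(m) Pr[M(t) = m]`. -/
def Ftil (mstar : ℕ) (p : ℝ) (α : ℤ → ℝ) (μ0 : ℤ → ℝ) (f : ℤ → ℝ) (t : ℕ) : ℝ :=
  ∑ m ∈ Finset.Icc (0 : ℤ) (mstar : ℤ), f m * chainDist mstar p α μ0 t m

/-- `α` is a valid decision function: each `α s` is a probability. -/
def ValidDecision (mstar : ℕ) (α : ℤ → ℝ) : Prop :=
  ∀ s ∈ Finset.Icc (-1 : ℤ) (mstar : ℤ), 0 ≤ α s ∧ α s ≤ 1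

/-- `μ0` is a valid initial distribution on the state set. -/
def ValidInit (mstar : ℕ) (μ0 : ℤ → ℝ) : Prop :=
  (∀ s ∈ Finset.Icc (-1 : ℤ) (mstar : ℤ), 0 ≤ μ0 s) ∧
    ∑ s ∈ Finset.Icc (-1 : ℤ) (mstar : ℤ), μ0 s = 1

/-- The normalization constant `N_d`. -/
def Nd (mstar : ℕ) (p : ℝ) (α : ℤ → ℝ) : ℝ :=
  1 - p * (1 - ∏ m' ∈ Finset.Icc (0 : ℤ) (mstar : ℤ), α m')
    + p * (1 - α (-1)) *
        (1 + ∑ m ∈ Finset.Icc (1 : ℤ) (mstar : ℤ), ∏ m' ∈ Finset.Icc (0 : ℤ) (m - 1), α m')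

/-- The steady-state distribution `s_d`. -/
def sd (mstar : ℕ) (p : ℝ) (α : ℤ → ℝ) : ℤ → ℝ := fun m =>
  if m = -1 then
    (1 - p * (1 - ∏ m' ∈ Finset.Icc (0 : ℤ) (mstar : ℤ), α m')) / Nd mstar p α
  else if m = 0 then p * (1 - α (-1)) / Nd mstar p α
  else p * (1 - α (-1)) * (∏ m' ∈ Finset.Icc (0 : ℤ) (m - 1), α m') / Nd mstar p α

open Finset Topology

section Kernel

variable {ι : Type*} (S : Finset ι)

def kernelStep (P : ι → ι → ℝ) : Module.End ℝ (ι → ℝ) where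
  toFun μ s' := ∑ s ∈ S, P s' s * μ s
  map_add' μ ν := by ext; simp [mul_add, sum_add_distrib]
  map_smul' c μ := by ext; simp [mul_sum, mul_left_comm]

def PositiveOn (L : Module.End ℝ (ι → ℝ)) : Prop :=
  ∀ μ, (∀ s ∈ S, 0 ≤ μ s) → ∀ s ∈ S, 0 ≤ L μ s

def PreservesMass (L : Module.End ℝ (ι → ℝ)) : Prop :=
  ∀ μ, ∑ s ∈ S, L μ s = ∑ s ∈ S, μ s

variable {S}

lemma kernelStep_apply (P : ι → ι → ℝ) (μ : ι → ℝ) (s' : ι) :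
    kernelStep S P μ s' = ∑ s ∈ S, P s' s * μ s := rfl

lemma kernelStep_congr (P : ι → ι → ℝ) {μ ν : ι → ℝ} (h : ∀ s ∈ S, μ s = ν s) :
    kernelStep S P μ = kernelStep S P ν := by
  ext s'
  exact sum_congr rfl fun s hs => by rw [h s hs]

lemma positiveOn_kernelStep {P : ι → ι → ℝ} (hP : ∀ s ∈ S, ∀ s', 0 ≤ P s' s) :
    PositiveOn S (kernelStep S P) :=
  fun _ hμ _ _ => sum_nonneg fun s hs => mul_nonneg (hP s hs _) (hμ s hs)

lemma preservesMass_kernelStep {P : ι → ι → ℝ}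
    (hP : ∀ s ∈ S, ∑ s' ∈ S, P s' s = 1) : PreservesMass S (kernelStep S P) := by
  intro μ
  simp only [kernelStep_apply]
  rw [sum_comm]
  exact sum_congr rfl fun s hs => by rw [← sum_mul, hP s hs, one_mul]

lemma kernelStep_single [DecidableEq ι] (P : ι → ι → ℝ) {s : ι} (hs : s ∈ S) :
    kernelStep S P (Pi.single s 1) = fun s' => P s' s := by
  ext s'
  simp [kernelStep_apply, Pi.single_apply, hs]

lemma kernelStep_pow_succ_eq_sum [DecidableEq ι] (P : ι → ι → ℝ) (μ : ι → ℝ)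
    (t : ℕ) :
    (kernelStep S P ^ (t + 1)) μ
      = ∑ s ∈ S, μ s • (kernelStep S P ^ (t + 1)) (Pi.single s 1) := by
  simp_rw [← map_smul, ← map_sum, pow_succ, Module.End.mul_apply]
  congr 1
  refine kernelStep_congr P fun s' hs' => ?_
  simp [Finset.sum_apply, Pi.single_apply, hs']

variable {L M : Module.End ℝ (ι → ℝ)}

lemma PositiveOn.mul (hL : PositiveOn S L) (hM : PositiveOn S M) : PositiveOn S (L * M) :=
  fun _ hμ => hL _ (hM _ hμ)

lemma PositiveOn.pow (hL : PositiveOn S L) (n : ℕ) : PositiveOn S (L ^ n) := by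
  induction n with
  | zero => exact fun _ hμ => hμ
  | succ n ih => rw [pow_succ]; exact ih.mul hL

lemma PreservesMass.mul (hL : PreservesMass S L) (hM : PreservesMass S M) :
    PreservesMass S (L * M) :=
  fun μ => (hL _).trans (hM μ)

lemma PreservesMass.pow (hL : PreservesMass S L) (n : ℕ) : PreservesMass S (L ^ n) := by
  induction n with
  | zero => exact fun _ => rfl
  | succ n ih => rw [pow_succ]; exact ih.mul hL

lemma PositiveOn.apply_le_apply (hL : PositiveOn S L) {μ ν : ι → ℝ}
    (h : ∀ s ∈ S, μ s ≤ ν s) {s : ι} (hs : s ∈ S) : L μ s ≤ L ν s := by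
  have := hL (ν - μ) (fun s hs => sub_nonneg.2 (h s hs)) s hs
  rwa [map_sub, Pi.sub_apply, sub_nonneg] at this

/-- Split `ν` into positive and negative parts of common mass `a`: the images of both dominate
`δ a` at `j`, and this common part cancels in `L ν`. -/
lemma PositiveOn.sum_abs_apply_le (hL : PositiveOn S L) (hmass : PreservesMass S L) {j : ι}
    (hj : j ∈ S) {δ : ℝ}
    (hmin : ∀ μ, (∀ s ∈ S, 0 ≤ μ s) → δ * ∑ s ∈ S, μ s ≤ L μ j)
    {ν : ι → ℝ} (hν : ∑ s ∈ S, ν s = 0) :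
    ∑ s ∈ S, |L ν s| ≤ (1 - δ) * ∑ s ∈ S, |ν s| := by
  classical
  set νp : ι → ℝ := fun s => max (ν s) 0
  set νn : ι → ℝ := fun s => max (-ν s) 0
  have hsplit : ν = νp - νn := by ext s; simp only [νp, νn, Pi.sub_apply]; grind
  have habs : ∀ s, |ν s| = νp s + νn s := fun s => by simp only [νp, νn]; grind
  have hpn : ∑ s ∈ S, νn s = ∑ s ∈ S, νp s := by
    rw [hsplit] at hν
    simp only [Pi.sub_apply, sum_sub_distrib, sub_eq_zero] at hν
    exact hν.symm
  set a := ∑ s ∈ S, νp s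
  set e : ι → ℝ := Pi.single j (δ * a) with he
  have he_sum : ∑ s ∈ S, e s = δ * a := by rw [he, sum_pi_single', if_pos hj]
  have hpos : ∀ μ : ι → ℝ, (∀ s, 0 ≤ μ s) → ∑ s ∈ S, μ s = a →
      ∀ s ∈ S, 0 ≤ L μ s - e s := by
    intro μ hμ hμa s hs
    by_cases hsj : s = j
    · rw [he, hsj, Pi.single_eq_same, sub_nonneg, ← hμa]; exact hmin μ fun s _ => hμ s
    · rw [he, Pi.single_eq_of_ne hsj, sub_zero]; exact hL μ (fun s _ => hμ s) s hs
  have hp := hpos νp (fun s => le_max_right _ _) rfl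
  have hn := hpos νn (fun s => le_max_right _ _) hpn
  calc ∑ s ∈ S, |L ν s|
      ≤ ∑ s ∈ S, ((L νp s - e s) + (L νn s - e s)) := by
        refine sum_le_sum fun s hs => ?_
        have h := abs_sub (L νp s - e s) (L νn s - e s)
        rwa [abs_of_nonneg (hp s hs), abs_of_nonneg (hn s hs), sub_sub_sub_cancel_right,
          ← Pi.sub_apply, ← map_sub, ← hsplit] at h
    _ = (1 - δ) * ∑ s ∈ S, |ν s| := by
        rw [sum_add_distrib, sum_sub_distrib, sum_sub_distrib, hmass, hmass, he_sum, hpn]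
        simp only [habs, sum_add_distrib, hpn]
        ring

lemma PositiveOn.tendsto_sum_abs_pow_apply (hL : PositiveOn S L) (hmass : PreservesMass S L)
    {n : ℕ} (hn : n ≠ 0) {j : ι} (hj : j ∈ S) {δ : ℝ} (hδ0 : 0 < δ) (hδ1 : δ ≤ 1)
    (hmin : ∀ μ, (∀ s ∈ S, 0 ≤ μ s) → δ * ∑ s ∈ S, μ s ≤ (L ^ n) μ j)
    {ν : ι → ℝ} (hν : ∑ s ∈ S, ν s = 0) :
    Tendsto (fun t => ∑ s ∈ S, |(L ^ t) ν s|) atTop (𝓝 0) := by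
  set g : ℕ → ℝ := fun t => ∑ s ∈ S, |(L ^ t) ν s|
  have hmass_pow : ∀ t, ∑ s ∈ S, (L ^ t) ν s = 0 := fun t => (hmass.pow t ν).trans hν
  have hanti : Antitone g := antitone_nat_of_succ_le fun t => by
    have := hL.sum_abs_apply_le hmass hj (δ := 0)
      (fun μ hμ => by simpa using hL μ hμ j hj) (hmass_pow t)
    simpa only [g, pow_succ', Module.End.mul_apply, sub_zero, one_mul] using this
  have hstep : ∀ t, g (n + t) ≤ (1 - δ) * g t := fun t => by
    have := (hL.pow n).sum_abs_apply_le (hmass.pow n) hj hmin (hmass_pow t)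
    simpa only [g, pow_add, Module.End.mul_apply] using this
  have hgeom : ∀ q, g (q * n) ≤ (1 - δ) ^ q * g 0 := by
    intro q
    induction q with
    | zero => simp
    | succ q ih =>
      calc g ((q + 1) * n) = g (n + q * n) := by rw [add_mul, one_mul, add_comm]
        _ ≤ (1 - δ) * g (q * n) := hstep _
        _ ≤ (1 - δ) * ((1 - δ) ^ q * g 0) := by gcongr
        _ = (1 - δ) ^ (q + 1) * g 0 := by ring
  have hlim : Tendsto (fun t => (1 - δ) ^ (t / n) * g 0) atTop (𝓝 0) := by
    simpa using ((tendsto_pow_atTop_nhds_zero_of_lt_one (by linarith) (by linarith)).comp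
      (Nat.tendsto_div_const_atTop hn)).mul_const (g 0)
  exact squeeze_zero (fun t => sum_nonneg fun s _ => abs_nonneg _)
    (fun t => (hanti (Nat.div_mul_le_self t n)).trans (hgeom _)) hlim

lemma kernelStep_pow_apply_of_fixed {P : ι → ι → ℝ} {π : ι → ℝ}
    (hπ : ∀ s ∈ S, kernelStep S P π s = π s) (t : ℕ) :
    ∀ s ∈ S, (kernelStep S P ^ t) π s = π s := by
  induction t with
  | zero => exact fun _ _ => rfl
  | succ t ih =>
    intro s hs
    rw [pow_succ', Module.End.mul_apply, kernelStep_congr P ih, hπ s hs]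

theorem tendsto_kernelStep_pow_apply {P : ι → ι → ℝ} (hP0 : ∀ s ∈ S, ∀ s', 0 ≤ P s' s)
    (hP1 : ∀ s ∈ S, ∑ s' ∈ S, P s' s = 1) {n : ℕ} (hn : n ≠ 0) {j : ι} (hj : j ∈ S)
    {δ : ℝ} (hδ0 : 0 < δ) (hδ1 : δ ≤ 1)
    (hmin : ∀ μ, (∀ s ∈ S, 0 ≤ μ s) →
      δ * ∑ s ∈ S, μ s ≤ (kernelStep S P ^ n) μ j)
    {π μ : ι → ℝ} (hπ : ∀ s ∈ S, kernelStep S P π s = π s)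
    (hμ : ∑ s ∈ S, μ s = ∑ s ∈ S, π s) {s : ι} (hs : s ∈ S) :
    Tendsto (fun t => (kernelStep S P ^ t) μ s) atTop (𝓝 (π s)) := by
  have h := (positiveOn_kernelStep hP0).tendsto_sum_abs_pow_apply (preservesMass_kernelStep hP1)
    hn hj hδ0 hδ1 hmin (ν := μ - π) (by simp [sum_sub_distrib, hμ])
  rw [tendsto_iff_norm_sub_tendsto_zero]
  refine squeeze_zero (fun _ => norm_nonneg _) (fun t => ?_) h
  rw [Real.norm_eq_abs, ← kernelStep_pow_apply_of_fixed hπ t s hs, ← Pi.sub_apply, ← map_sub]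
  exact single_le_sum (f := fun s => |(kernelStep S P ^ t) (μ - π) s|)
    (fun _ _ => abs_nonneg _) hs

end Kernel

section ElementaryLink

variable {mstar : ℕ} {p : ℝ} {α : ℤ → ℝ}

local notation "S" => Icc (-1 : ℤ) (mstar : ℤ)

def waitSucc (mstar : ℕ) (s : ℤ) : ℤ := if s = -1 ∨ s = mstar then -1 else s + 1

lemma T0_eq_single (s' s : ℤ) :
    T0 mstar s' s = (Pi.single (waitSucc mstar s) 1 : ℤ → ℝ) s' := by
  simp only [T0, waitSucc, Pi.single_apply]
  split_ifs <;> grind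

lemma waitSucc_mem {s : ℤ} (hs : s ∈ S) : waitSucc mstar s ∈ S := by
  simp only [mem_Icc, waitSucc] at hs ⊢
  split_ifs <;> omega

lemma sum_T0 {s : ℤ} (hs : s ∈ S) : ∑ s' ∈ S, T0 mstar s' s = 1 := by
  simp [T0_eq_single, sum_pi_single', waitSucc_mem hs]

lemma T1_eq_single (s' s : ℤ) :
    T1 p s' s = (Pi.single (-1) (1 - p) : ℤ → ℝ) s' + (Pi.single 0 p : ℤ → ℝ) s' := by
  simp only [T1, Pi.single_apply]
  split_ifs <;> grind

lemma sum_T1 (s : ℤ) : ∑ s' ∈ S, T1 p s' s = 1 := by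
  simp [T1_eq_single, sum_add_distrib, sum_pi_single']

lemma Pd_nonneg (hp0 : 0 ≤ p) (hp1 : p ≤ 1) (hα : ValidDecision mstar α) :
    ∀ s ∈ S, ∀ s', 0 ≤ Pd mstar p α s' s := by
  intro s hs s'
  obtain ⟨hα0, hα1⟩ := hα s hs
  unfold Pd T0 T1
  split_ifs <;> nlinarith

lemma sum_Pd {s : ℤ} (hs : s ∈ S) : ∑ s' ∈ S, Pd mstar p α s' s = 1 := by
  simp only [Pd, sum_add_distrib, ← sum_mul, sum_T0 hs, sum_T1]
  ring

lemma chainDist_eq_pow (μ0 : ℤ → ℝ) (t : ℕ) :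
    chainDist mstar p α μ0 t = (kernelStep S (Pd mstar p α) ^ t) μ0 := by
  induction t with
  | zero => rfl
  | succ t ih =>
    ext s'
    rw [pow_succ', Module.End.mul_apply, ← ih]
    rfl

lemma single_waitSucc_le_Pd (hp0 : 0 ≤ p) (hα : ValidDecision mstar α) {s : ℤ} (hs : s ∈ S)
    (s' : ℤ) :
    α s * (Pi.single (waitSucc mstar s) 1 : ℤ → ℝ) s'
        + (1 - α s) * (1 - p) * (Pi.single (-1) 1 : ℤ → ℝ) s' ≤ Pd mstar p α s' s := by
  have hT1 : (1 - p) * (Pi.single (-1) 1 : ℤ → ℝ) s' ≤ T1 p s' s := by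
    rw [T1_eq_single]
    by_cases h : s' = -1
    · simp [h]
    · simp [Pi.single_apply, h]
      split_ifs <;> linarith
  rw [Pd, T0_eq_single]
  nlinarith [(hα s hs).2]

/-- At each step the chain either waits, moving one state closer to `-1`, or requests and
fails, landing at `-1`; together these have probability at least `1 - p`. -/
lemma one_sub_pow_le_kernelStep_Pd_pow_single (hp0 : 0 ≤ p) (hp1 : p ≤ 1)
    (hα : ValidDecision mstar α) (t : ℕ) :
    ∀ s ∈ S, (s = -1 ∨ (mstar : ℤ) + 1 ≤ s + t) →
      (1 - p) ^ t ≤ (kernelStep S (Pd mstar p α) ^ t) (Pi.single s 1) (-1) := by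
  have hL := (positiveOn_kernelStep (Pd_nonneg hp0 hp1 hα)).pow
  induction t with
  | zero =>
    intro s hs hreach
    have : s = -1 := by simp only [mem_Icc] at hs; omega
    simp [this]
  | succ t ih =>
    intro s hs hreach
    have hnext := ih (waitSucc mstar s) (waitSucc_mem hs) (by
      simp only [mem_Icc] at hs; unfold waitSucc; split_ifs <;> omega)
    have hreset := ih (-1) (by simp) (Or.inl rfl)
    obtain ⟨hα0, hα1⟩ := hα s hs
    calc (1 - p) ^ (t + 1) ≤ (α s + (1 - α s) * (1 - p)) * (1 - p) ^ t := by
          rw [pow_succ']; gcongr; nlinarith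
      _ ≤ α s * (kernelStep S (Pd mstar p α) ^ t) (Pi.single (waitSucc mstar s) 1) (-1)
          + (1 - α s) * (1 - p) * (kernelStep S (Pd mstar p α) ^ t) (Pi.single (-1) 1) (-1) := by
          have : 0 ≤ (1 - α s) * (1 - p) := mul_nonneg (by linarith) (by linarith)
          rw [add_mul]
          exact add_le_add (mul_le_mul_of_nonneg_left hnext hα0)
            (mul_le_mul_of_nonneg_left hreset this)
      _ = (kernelStep S (Pd mstar p α) ^ t) (α s • Pi.single (waitSucc mstar s) 1
          + ((1 - α s) * (1 - p)) • Pi.single (-1) 1) (-1) := by simp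
      _ ≤ (kernelStep S (Pd mstar p α) ^ t)
            (kernelStep S (Pd mstar p α) (Pi.single s 1)) (-1) :=
          (hL t).apply_le_apply (fun s' _ => by
            rw [kernelStep_single _ hs]; exact single_waitSucc_le_Pd hp0 hα hs s') (by simp)
      _ = (kernelStep S (Pd mstar p α) ^ (t + 1)) (Pi.single s 1) (-1) := by
          rw [pow_succ, Module.End.mul_apply]

lemma kernelStep_Pd_pow_minorization (hp0 : 0 ≤ p) (hp1 : p ≤ 1) (hα : ValidDecision mstar α)
    (μ : ℤ → ℝ) (hμ : ∀ s ∈ S, 0 ≤ μ s) :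
    (1 - p) ^ (mstar + 1) * ∑ s ∈ S, μ s
      ≤ (kernelStep S (Pd mstar p α) ^ (mstar + 1)) μ (-1) := by
  rw [kernelStep_pow_succ_eq_sum, Finset.sum_apply, mul_sum]
  refine sum_le_sum fun s hs => ?_
  rw [Pi.smul_apply, smul_eq_mul, mul_comm]
  gcongr
  · exact hμ s hs
  · refine one_sub_pow_le_kernelStep_Pd_pow_single hp0 hp1 hα _ s hs ?_
    simp only [mem_Icc] at hs
    omega

def keepProb (α : ℤ → ℝ) (m : ℤ) : ℝ := ∏ m' ∈ Icc 0 (m - 1), α m'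

lemma keepProb_zero : keepProb α 0 = 1 := by simp [keepProb]

lemma keepProb_succ {m : ℤ} (hm : 0 ≤ m) : keepProb α (m + 1) = keepProb α m * α m := by
  have h := insert_Icc_right_eq_Icc_add_one (by omega : (0 : ℤ) ≤ m - 1 + 1)
  rw [sub_add_cancel] at h
  rw [keepProb, keepProb, add_sub_cancel_right, ← h, prod_insert (by simp), mul_comm]

lemma keepProb_nonneg (hα : ValidDecision mstar α) {m : ℤ} (hm : m ≤ mstar + 1) :
    0 ≤ keepProb α m :=
  prod_nonneg fun m' hm' => (hα m' (by simp only [mem_Icc] at hm' ⊢; omega)).1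

lemma sum_one_sub_mul_keepProb (n : ℕ) :
    ∑ m ∈ Icc (0 : ℤ) n, (1 - α m) * keepProb α m = 1 - keepProb α (n + 1) := by
  induction n with
  | zero => simp [keepProb]
  | succ n ih =>
    push_cast
    rw [← insert_Icc_right_eq_Icc_add_one (by omega), sum_insert (by simp), ih,
      keepProb_succ (by omega : (0 : ℤ) ≤ n + 1)]
    ring

lemma sum_Icc_neg_one (g : ℤ → ℝ) :
    ∑ s ∈ S, g s = g (-1) + ∑ m ∈ Icc (0 : ℤ) mstar, g m := by
  rw [← insert_Icc_add_one_left_eq_Icc (by omega : (-1 : ℤ) ≤ mstar), neg_add_cancel,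
    sum_insert (by simp)]

lemma Nd_eq_keepProb : Nd mstar p α = 1 - p * (1 - keepProb α (mstar + 1))
    + p * (1 - α (-1)) * ∑ m ∈ Icc (0 : ℤ) mstar, keepProb α m := by
  rw [← insert_Icc_add_one_left_eq_Icc (by omega : (0 : ℤ) ≤ mstar), zero_add,
    sum_insert (by simp), keepProb_zero]
  simp [Nd, keepProb]

lemma Nd_pos (hp0 : 0 ≤ p) (hp1 : p < 1) (hα : ValidDecision mstar α) : 0 < Nd mstar p α := by
  have htop : 0 ≤ p * keepProb α (mstar + 1) := mul_nonneg hp0 (keepProb_nonneg hα le_rfl)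
  have hrest : 0 ≤ p * (1 - α (-1)) * ∑ m ∈ Icc (0 : ℤ) mstar, keepProb α m :=
    mul_nonneg (mul_nonneg hp0 (by linarith [(hα (-1) (by simp)).2]))
      (sum_nonneg fun m hm => keepProb_nonneg hα (by simp only [mem_Icc] at hm; omega))
  rw [Nd_eq_keepProb]
  linarith

lemma sd_neg_one :
    sd mstar p α (-1) = (1 - p * (1 - keepProb α (mstar + 1))) / Nd mstar p α := by
  simp [sd, keepProb]

lemma sd_of_nonneg {m : ℤ} (hm : 0 ≤ m) :
    sd mstar p α m = p * (1 - α (-1)) * keepProb α m / Nd mstar p α := by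
  by_cases h0 : m = 0
  · simp [sd, h0, keepProb_zero]
  · simp [sd, keepProb, h0, show m ≠ -1 by omega]

lemma sum_sd (hp0 : 0 ≤ p) (hp1 : p < 1) (hα : ValidDecision mstar α) :
    ∑ s ∈ S, sd mstar p α s = 1 := by
  rw [sum_Icc_neg_one, sum_congr rfl fun m hm => sd_of_nonneg (mem_Icc.1 hm).1, ← sum_div,
    ← mul_sum, sd_neg_one, ← add_div, ← Nd_eq_keepProb, div_self (Nd_pos hp0 hp1 hα).ne']

lemma sum_one_sub_mul_sd (hp0 : 0 ≤ p) (hp1 : p < 1) (hα : ValidDecision mstar α) :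
    ∑ s ∈ S, (1 - α s) * sd mstar p α s = (1 - α (-1)) / Nd mstar p α := by
  have hN := (Nd_pos hp0 hp1 hα).ne'
  have h : ∀ m ∈ Icc (0 : ℤ) mstar, (1 - α m) * sd mstar p α m
      = p * (1 - α (-1)) / Nd mstar p α * ((1 - α m) * keepProb α m) := fun m hm => by
    rw [sd_of_nonneg (mem_Icc.1 hm).1]; ring
  rw [sum_Icc_neg_one, sum_congr rfl h, ← mul_sum, sum_one_sub_mul_keepProb, sd_neg_one]
  field_simp
  ring

lemma sum_T0_mul (h : ℤ → ℝ) {s' : ℤ} (hs' : s' ∈ S) :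
    ∑ s ∈ S, T0 mstar s' s * h s
      = if s' = -1 then h (-1) + h mstar else if s' = 0 then 0 else h (s' - 1) := by
  simp only [mem_Icc] at hs'
  have hvanish : ∀ c ∈ S, s' ≠ waitSucc mstar c → T0 mstar s' c * h c = 0 :=
    fun c _ hc => by rw [T0_eq_single, Pi.single_apply, if_neg hc, zero_mul]
  split_ifs with h1 h0
  · rw [sum_eq_add (-1 : ℤ) (mstar : ℤ) (by omega) (fun c hc hne => hvanish c hc ?_)
      (fun h => absurd (by simp) h) (fun h => absurd (by simp) h)]
    · simp [T0, h1]
    · simp only [mem_Icc] at hc; simp only [waitSucc, if_neg (not_or.2 hne)]; omega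
  · refine sum_eq_zero fun c hc => hvanish c hc ?_
    simp only [mem_Icc] at hc; unfold waitSucc; split_ifs <;> omega
  · rw [sum_eq_single (s' - 1) (fun c hc hne => hvanish c hc ?_)
      (fun h => absurd (by simp; omega) h)]
    · rw [T0, if_neg (by omega), if_neg (by omega), if_pos (by ring), one_mul]
    · simp only [mem_Icc] at hc; unfold waitSucc; split_ifs <;> omega

lemma kernelStep_Pd_sd (hp0 : 0 ≤ p) (hp1 : p < 1) (hα : ValidDecision mstar α) :
    ∀ s' ∈ S, kernelStep S (Pd mstar p α) (sd mstar p α) s' = sd mstar p α s' := by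
  intro s' hs'
  have hN := (Nd_pos hp0 hp1 hα).ne'
  have hsplit : kernelStep S (Pd mstar p α) (sd mstar p α) s'
      = ∑ s ∈ S, T0 mstar s' s * (α s * sd mstar p α s)
        + T1 p s' 0 * ∑ s ∈ S, (1 - α s) * sd mstar p α s := by
    rw [kernelStep_apply, mul_sum, ← sum_add_distrib]
    exact sum_congr rfl fun s _ => by simp only [Pd, T1]; ring
  rw [hsplit, sum_T0_mul _ hs', sum_one_sub_mul_sd hp0 hp1 hα]
  simp only [mem_Icc] at hs'
  rcases (by omega : s' = -1 ∨ s' = 0 ∨ 1 ≤ s') with rfl | rfl | hs1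
  · rw [sd_neg_one, sd_of_nonneg (Nat.cast_nonneg _), keepProb_succ (Nat.cast_nonneg _)]
    simp only [T1, if_true]
    field_simp
    ring
  · simp only [T1, sd_of_nonneg le_rfl, keepProb_zero]
    simp only [if_neg (by omega : (0 : ℤ) ≠ -1), if_true]
    ring
  · have hkeep := keepProb_succ (α := α) (by omega : 0 ≤ s' - 1)
    rw [sub_add_cancel] at hkeep
    rw [if_neg (by omega), if_neg (by omega), sd_of_nonneg (by omega), sd_of_nonneg (by omega),
      hkeep]
    simp only [T1, if_neg (by omega : s' ≠ -1), if_neg (by omega : s' ≠ 0)]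
    ring

lemma tendsto_chainDist_sd (hp0 : 0 < p) (hp1 : p < 1) (hα : ValidDecision mstar α)
    {μ0 : ℤ → ℝ} (hμ0 : ∑ s ∈ S, μ0 s = 1) {s : ℤ} (hs : s ∈ S) :
    Tendsto (fun t => chainDist mstar p α μ0 t s) atTop (𝓝 (sd mstar p α s)) := by
  simp only [chainDist_eq_pow]
  exact tendsto_kernelStep_pow_apply (Pd_nonneg hp0.le hp1.le hα) (fun s hs => sum_Pd hs)
    (Nat.succ_ne_zero mstar) (by simp) (pow_pos (by linarith) _)
    (pow_le_one₀ (by linarith) (by linarith)) (kernelStep_Pd_pow_minorization hp0.le hp1.le hα)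
    (kernelStep_Pd_sd hp0.le hp1 hα) (by rw [hμ0, sum_sd hp0.le hp1 hα]) hs

end ElementaryLink

theorem steady_state_expected_value_general (mstar : ℕ) (p : ℝ) (hp0 : 0 < p) (hp1 : p < 1)
    (α : ℤ → ℝ) (hα : ValidDecision mstar α)
    (μ0 : ℤ → ℝ) (hμ0 : ValidInit mstar μ0)
    (f : ℤ → ℝ) :
    Tendsto (Ftil mstar p α μ0 f) atTop
      (nhds (∑ m ∈ Finset.Icc (0 : ℤ) (mstar : ℤ), f m * sd mstar p α m)) :=
  tendsto_finsetSum _ fun m hm =>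
    (tendsto_chainDist_sd hp0 hp1 hα hμ0.2
      (by simp only [mem_Icc] at hm ⊢; omega)).const_mul (f m)

/-- **Steady-state expected value of an elementary link** (Theorem 2 of the paper):
under any stationary policy `(d, d, …)`, for any initial distribution, the limit
`lim_{t→∞} F̃^{(d,d,…)}(t)` exists and equals `∑_{m=0}^{m*} f(m) s_d(m)`. -/
theorem steady_state_expected_value (mstar : ℕ) (p : ℝ) (hp0 : 0 < p) (hp1 : p < 1)
    (α : ℤ → ℝ) (hα : ValidDecision mstar α)
    (μ0 : ℤ → ℝ) (hμ0 : ValidInit mstar μ0)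
    (f : ℤ → ℝ) (hf : f (-1) = 0) :
    Tendsto (Ftil mstar p α μ0 f) atTop
      (nhds (∑ m ∈ Finset.Icc (0 : ℤ) (mstar : ℤ), f m * sd mstar p α m)) :=
  steady_state_expected_value_general mstar p hp0 hp1 α hα μ0 hμ0 f
end
end

section
/- Optimality of the memory-cutoff policy in the steady-state limit: let p ∈ (0,1), m* ∈ ℕ, and f : {−1,0,…,m*} → [0,1] with f(−1) = 0. Then the supremum over all decision functions d of lim_{t→∞} F̃^{(d,d,…)}(t) (each limit exists by the steady-state theorem) equals max_{t* ∈ {0,1,…,m*}} (p/(1 + t*·p)) ∑_{m=0}^{t*} f(m). In particular, the optimal steady-state value of the elementary link is achieved by a memory-cutoff policy. -/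
open BigOperators Filter

noncomputable section

/-- The memory-cutoff decision function with cutoff `t*`: wait (with probability 1) for
`m ∈ {0, …, t*-1}`, request for `m = -1` and `m ∈ {t*, …, m*}`. -/
def cutoffDecision (tstar : ℕ) : ℤ → ℝ := fun m =>
  if 0 ≤ m ∧ m ≤ (tstar : ℤ) - 1 then 1 else 0

-- Auxiliary development
namespace MCO

open Finset

/-- The state finset. -/
abbrev SS (mstar : ℕ) : Finset ℤ := Finset.Icc (-1 : ℤ) (mstar : ℤ)

lemma neg_one_mem (mstar : ℕ) : (-1 : ℤ) ∈ SS mstar := by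
  simp [SS, Finset.mem_Icc]

lemma nat_mem (mstar : ℕ) {i : ℕ} (hi : i ≤ mstar) : (i : ℤ) ∈ SS mstar := by
  simp [SS, Finset.mem_Icc]; omega

lemma Icc_int_eq_map (n : ℕ) :
    Finset.Icc (0 : ℤ) ((n : ℤ) - 1) = (Finset.range n).map ⟨(Nat.cast : ℕ → ℤ), Nat.cast_injective⟩ := by
  ext x
  simp only [Finset.mem_Icc, Finset.mem_map, Finset.mem_range, Function.Embedding.coeFn_mk]
  constructor
  · intro h
    exact ⟨x.toNat, by omega, by omega⟩
  · rintro ⟨a, ha, rfl⟩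
    omega

lemma sum_Icc_int (g : ℤ → ℝ) (n : ℕ) :
    ∑ s ∈ Finset.Icc (0 : ℤ) ((n : ℤ) - 1), g s = ∑ i ∈ Finset.range n, g (i : ℤ) := by
  rw [Icc_int_eq_map, Finset.sum_map]
  rfl

lemma prod_Icc_int (g : ℤ → ℝ) (n : ℕ) :
    ∏ s ∈ Finset.Icc (0 : ℤ) ((n : ℤ) - 1), g s = ∏ i ∈ Finset.range n, g (i : ℤ) := by
  rw [Icc_int_eq_map, Finset.prod_map]
  rfl

lemma sum_Icc_int' (g : ℤ → ℝ) (n : ℕ) :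
    ∑ s ∈ Finset.Icc (0 : ℤ) (n : ℤ), g s = ∑ i ∈ Finset.range (n + 1), g (i : ℤ) := by
  have h : ((n : ℤ)) = ((n + 1 : ℕ) : ℤ) - 1 := by push_cast; ring
  rw [h, sum_Icc_int]

lemma sum_SS (mstar : ℕ) (g : ℤ → ℝ) :
    ∑ s ∈ SS mstar, g s = g (-1) + ∑ i ∈ Finset.range (mstar + 1), g (i : ℤ) := by
  have h : SS mstar = insert (-1 : ℤ) (Finset.Icc (0 : ℤ) (mstar : ℤ)) := by
    ext x
    simp only [SS, Finset.mem_Icc, Finset.mem_insert]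
    omega
  rw [h, Finset.sum_insert (by simp [Finset.mem_Icc]), sum_Icc_int']

/-- `π n = ∏_{i<n} α i`. -/
def piN (α : ℤ → ℝ) : ℕ → ℝ := fun n => ∏ i ∈ Finset.range n, α (i : ℤ)

lemma piN_succ (α : ℤ → ℝ) (n : ℕ) : piN α (n + 1) = piN α n * α (n : ℤ) := by
  simp [piN, Finset.prod_range_succ]

lemma prod_Icc_piN (α : ℤ → ℝ) (n : ℕ) :
    ∏ m' ∈ Finset.Icc (0 : ℤ) ((n : ℤ) - 1), α m' = piN α n := prod_Icc_int α n

lemma piN_nonneg {mstar : ℕ} {α : ℤ → ℝ} (hα : ValidDecision mstar α) {n : ℕ}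
    (hn : n ≤ mstar + 1) : 0 ≤ piN α n := by
  apply Finset.prod_nonneg
  intro i hi
  exact (hα i (nat_mem mstar (by simp at hi; omega))).1

lemma piN_le_one {mstar : ℕ} {α : ℤ → ℝ} (hα : ValidDecision mstar α) {n : ℕ}
    (hn : n ≤ mstar + 1) : piN α n ≤ 1 := by
  apply Finset.prod_le_one
  · intro i hi
    exact (hα i (nat_mem mstar (by simp at hi; omega))).1
  · intro i hi
    exact (hα i (nat_mem mstar (by simp at hi; omega))).2

lemma piN_antitone {mstar : ℕ} {α : ℤ → ℝ} (hα : ValidDecision mstar α) {n : ℕ}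
    (hn : n ≤ mstar) : piN α (n + 1) ≤ piN α n := by
  rw [piN_succ]
  have h1 := (hα n (nat_mem mstar hn)).2
  have h0 := piN_nonneg hα (n := n) (by omega)
  nlinarith

end MCO
namespace MCO
open Finset

lemma sum_T1_left (mstar : ℕ) (p : ℝ) (g : ℤ → ℝ) (s : ℤ) :
    ∑ s' ∈ SS mstar, g s' * T1 p s' s = (1 - p) * g (-1) + p * g 0 := by
  have h : ∀ s' ∈ SS mstar, g s' * T1 p s' s =
      (if s' = -1 then (1 - p) * g (-1) else 0) + (if s' = 0 then p * g 0 else 0) := by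
    intro s' _
    unfold T1
    split_ifs <;> simp_all <;> ring
  rw [Finset.sum_congr rfl h, Finset.sum_add_distrib, Finset.sum_ite_eq', Finset.sum_ite_eq',
    if_pos (neg_one_mem mstar), if_pos (by exact_mod_cast nat_mem mstar (Nat.zero_le mstar))]

lemma sum_T0_left (mstar : ℕ) (g : ℤ → ℝ) {s : ℤ} (hs : s ∈ SS mstar) :
    ∑ s' ∈ SS mstar, g s' * T0 mstar s' s =
      if s = -1 ∨ s = (mstar : ℤ) then g (-1) else g (s + 1) := by
  simp only [SS, Finset.mem_Icc] at hs
  by_cases h : s = -1 ∨ s = (mstar : ℤ)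
  · rw [if_pos h]
    have hcong : ∀ s' ∈ SS mstar, g s' * T0 mstar s' s =
        (if s' = -1 then g (-1) else 0) := by
      intro s' hs'
      unfold T0
      rcases h with h | h <;> subst h <;> split_ifs <;> subst_vars <;> norm_num <;> omega
    rw [Finset.sum_congr rfl hcong, Finset.sum_ite_eq', if_pos (neg_one_mem mstar)]
  · rw [if_neg h]
    push_neg at h
    have hcong : ∀ s' ∈ SS mstar, g s' * T0 mstar s' s =
        (if s' = s + 1 then g (s + 1) else 0) := by
      intro s' hs'
      unfold T0
      rw [if_neg h.1, if_neg h.2]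
      split_ifs <;> subst_vars <;> norm_num
    rw [Finset.sum_congr rfl hcong, Finset.sum_ite_eq',
      if_pos (by simp [SS, Finset.mem_Icc]; omega)]

lemma sum_T1_one (mstar : ℕ) (p : ℝ) (s : ℤ) : ∑ s' ∈ SS mstar, T1 p s' s = 1 := by
  have := sum_T1_left mstar p (fun _ => 1) s
  simpa using this

lemma sum_T0_one (mstar : ℕ) {s : ℤ} (hs : s ∈ SS mstar) :
    ∑ s' ∈ SS mstar, T0 mstar s' s = 1 := by
  have h := sum_T0_left mstar (fun _ => (1:ℝ)) hs
  simp only [one_mul] at h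
  rw [h]
  split_ifs <;> rfl

lemma T0_nonneg (mstar : ℕ) (s' s : ℤ) : 0 ≤ T0 mstar s' s := by
  unfold T0; split_ifs <;> norm_num

lemma T1_nonneg {p : ℝ} (hp0 : 0 ≤ p) (hp1 : p ≤ 1) (s' s : ℤ) : 0 ≤ T1 p s' s := by
  unfold T1; split_ifs <;> linarith

lemma Pd_nonneg {mstar : ℕ} {p : ℝ} {α : ℤ → ℝ} (hp0 : 0 ≤ p) (hp1 : p ≤ 1)
    (hα : ValidDecision mstar α) (s' : ℤ) {s : ℤ} (hs : s ∈ SS mstar) :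
    0 ≤ Pd mstar p α s' s := by
  have h := hα s hs
  have h0 := T0_nonneg mstar s' s
  have h1 := T1_nonneg hp0 hp1 s' s
  unfold Pd
  nlinarith

lemma Pd_colsum {mstar : ℕ} {p : ℝ} (α : ℤ → ℝ) {s : ℤ} (hs : s ∈ SS mstar) :
    ∑ s' ∈ SS mstar, Pd mstar p α s' s = 1 := by
  unfold Pd
  rw [Finset.sum_add_distrib, ← Finset.sum_mul, ← Finset.sum_mul,
    sum_T0_one mstar hs, sum_T1_one mstar p s]
  ring

/-- Powers of the transition matrix (restricted to the state set). -/
def Mpow (mstar : ℕ) (p : ℝ) (α : ℤ → ℝ) : ℕ → ℤ → ℤ → ℝ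
  | 0 => fun s' s => if s' = s then 1 else 0
  | (k + 1) => fun s' s =>
      ∑ s'' ∈ SS mstar, Mpow mstar p α k s' s'' * Pd mstar p α s'' s

lemma Mpow_nonneg {mstar : ℕ} {p : ℝ} {α : ℤ → ℝ} (hp0 : 0 ≤ p) (hp1 : p ≤ 1)
    (hα : ValidDecision mstar α) (k : ℕ) (s' : ℤ) {s : ℤ} (hs : s ∈ SS mstar) :
    0 ≤ Mpow mstar p α k s' s := by
  induction k generalizing s with
  | zero => unfold Mpow; split_ifs <;> norm_num
  | succ k ih =>
    unfold Mpow
    apply Finset.sum_nonneg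
    intro s'' hs''
    exact mul_nonneg (ih hs'') (Pd_nonneg hp0 hp1 hα s'' hs)

lemma Mpow_colsum {mstar : ℕ} {p : ℝ} (α : ℤ → ℝ) (k : ℕ) {s : ℤ} (hs : s ∈ SS mstar) :
    ∑ s' ∈ SS mstar, Mpow mstar p α k s' s = 1 := by
  induction k generalizing s with
  | zero =>
    unfold Mpow
    rw [Finset.sum_ite_eq', if_pos hs]
  | succ k ih =>
    unfold Mpow
    rw [Finset.sum_comm]
    have h : ∀ s'' ∈ SS mstar,
        ∑ s' ∈ SS mstar, Mpow mstar p α k s' s'' * Pd mstar p α s'' s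
          = Pd mstar p α s'' s := by
      intro s'' hs''
      rw [← Finset.sum_mul, ih hs'', one_mul]
    rw [Finset.sum_congr rfl h, Pd_colsum α hs]

lemma doeblin_aux {mstar : ℕ} {p : ℝ} {α : ℤ → ℝ} (hp0 : 0 ≤ p) (hp1 : p ≤ 1)
    (hα : ValidDecision mstar α) (k : ℕ) :
    ∀ s ∈ SS mstar, (s = -1 ∨ (mstar : ℤ) + 1 - s ≤ k) →
      (1 - p) ^ k ≤ Mpow mstar p α k (-1) s := by
  induction k with
  | zero =>
    intro s hs h
    simp only [SS, Finset.mem_Icc] at hs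
    have hs1 : s = -1 := by omega
    subst hs1
    unfold Mpow
    norm_num
  | succ k ih =>
    intro s hs h
    have hsI := hs
    simp only [SS, Finset.mem_Icc] at hsI
    have has := hα s hs
    unfold Mpow
    have hexp : ∀ s'' ∈ SS mstar,
        Mpow mstar p α k (-1) s'' * Pd mstar p α s'' s =
          Mpow mstar p α k (-1) s'' * T0 mstar s'' s * α s +
          Mpow mstar p α k (-1) s'' * T1 p s'' s * (1 - α s) := by
      intro s'' _
      unfold Pd
      ring
    rw [Finset.sum_congr rfl hexp, Finset.sum_add_distrib, ← Finset.sum_mul, ← Finset.sum_mul,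
      sum_T0_left mstar (Mpow mstar p α k (-1)) hs,
      sum_T1_left mstar p (Mpow mstar p α k (-1)) s]
    have hX1 : (1 - p) ^ k ≤ Mpow mstar p α k (-1) (-1) :=
      ih (-1) (neg_one_mem mstar) (Or.inl rfl)
    have hX0 : 0 ≤ Mpow mstar p α k (-1) 0 :=
      Mpow_nonneg hp0 hp1 hα k (-1) (nat_mem mstar (Nat.zero_le mstar) (i := 0))
    have hpk : (0:ℝ) ≤ (1 - p) ^ k := pow_nonneg (by linarith) k
    have key : ∀ Y : ℝ, (1 - p) ^ k ≤ Y →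
        (1 - p) ^ (k + 1) ≤ Y * α s +
          ((1 - p) * Mpow mstar p α k (-1) (-1) + p * Mpow mstar p α k (-1) 0) * (1 - α s) := by
      intro Y hY
      have e : (1-p)^(k+1) = (1-p)^k * (1-p) := by ring
      rw [e]
      nlinarith [mul_nonneg has.1 (by linarith : (0:ℝ) ≤ Y - (1-p)^k),
        mul_nonneg (mul_nonneg (by linarith : (0:ℝ) ≤ 1 - α s) (by linarith : (0:ℝ) ≤ 1 - p))
          (by linarith : (0:ℝ) ≤ Mpow mstar p α k (-1) (-1) - (1-p)^k),
        mul_nonneg (mul_nonneg (by linarith : (0:ℝ) ≤ 1 - α s) hp0) hX0,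
        mul_nonneg (mul_nonneg hpk has.1) hp0]
    by_cases hcase : s = -1 ∨ s = (mstar : ℤ)
    · rw [if_pos hcase]
      exact key _ hX1
    · rw [if_neg hcase]
      push_neg at hcase
      have hX2 : (1 - p) ^ k ≤ Mpow mstar p α k (-1) (s + 1) := by
        apply ih (s + 1) (by simp [SS, Finset.mem_Icc]; omega)
        right; omega
      exact key _ hX2

lemma doeblin {mstar : ℕ} {p : ℝ} {α : ℤ → ℝ} (hp0 : 0 ≤ p) (hp1 : p ≤ 1)
    (hα : ValidDecision mstar α) {s : ℤ} (hs : s ∈ SS mstar) :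
    (1 - p) ^ (mstar + 1) ≤ Mpow mstar p α (mstar + 1) (-1) s := by
  apply doeblin_aux hp0 hp1 hα (mstar + 1) s hs
  simp only [SS, Finset.mem_Icc] at hs
  by_cases h : s = -1
  · exact Or.inl h
  · right; omega

end MCO
namespace MCO
open Finset

lemma chain_step (mstar : ℕ) (p : ℝ) (α : ℤ → ℝ) (μ0 : ℤ → ℝ) (t : ℕ) (s' : ℤ) :
    chainDist mstar p α μ0 (t + 1) s' =
      ∑ s ∈ SS mstar, Pd mstar p α s' s * chainDist mstar p α μ0 t s := rfl

lemma chain_sum {mstar : ℕ} {p : ℝ} {α : ℤ → ℝ} {μ0 : ℤ → ℝ} (hμ0 : ValidInit mstar μ0)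
    (t : ℕ) : ∑ s ∈ SS mstar, chainDist mstar p α μ0 t s = 1 := by
  induction t with
  | zero => exact hμ0.2
  | succ t ih =>
    simp only [chain_step]
    rw [Finset.sum_comm]
    have h : ∀ s ∈ SS mstar,
        ∑ s' ∈ SS mstar, Pd mstar p α s' s * chainDist mstar p α μ0 t s
          = chainDist mstar p α μ0 t s := by
      intro s hs
      rw [← Finset.sum_mul, Pd_colsum α hs, one_mul]
    rw [Finset.sum_congr rfl h, ih]

lemma Mpow_zero (mstar : ℕ) (p : ℝ) (α : ℤ → ℝ) (s' s : ℤ) :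
    Mpow mstar p α 0 s' s = if s' = s then 1 else 0 := rfl

lemma Mpow_succ (mstar : ℕ) (p : ℝ) (α : ℤ → ℝ) (k : ℕ) (s' s : ℤ) :
    Mpow mstar p α (k + 1) s' s
      = ∑ s'' ∈ SS mstar, Mpow mstar p α k s' s'' * Pd mstar p α s'' s := rfl

lemma chain_Mpow (mstar : ℕ) (p : ℝ) (α : ℤ → ℝ) (μ0 : ℤ → ℝ) (k t : ℕ) {s' : ℤ}
    (hs' : s' ∈ SS mstar) :
    chainDist mstar p α μ0 (t + k) s' =
      ∑ s ∈ SS mstar, Mpow mstar p α k s' s * chainDist mstar p α μ0 t s := by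
  induction k generalizing t with
  | zero =>
    simp only [Nat.add_zero, Mpow_zero]
    rw [Finset.sum_congr rfl (fun s _ => by rw [ite_mul, one_mul, zero_mul]),
      Finset.sum_ite_eq, if_pos hs']
  | succ k ih =>
    have he : t + (k + 1) = (t + 1) + k := by omega
    rw [he, ih (t + 1)]
    simp only [chain_step, Finset.mul_sum, Mpow_succ]
    rw [Finset.sum_comm]
    refine Finset.sum_congr rfl fun s hs => ?_
    rw [Finset.sum_mul]
    exact Finset.sum_congr rfl fun s'' _ => by ring

/-- Unnormalized steady state. -/
def numf (mstar : ℕ) (p : ℝ) (α : ℤ → ℝ) : ℤ → ℝ := fun s =>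
  if s = -1 then 1 - p * (1 - piN α (mstar + 1))
  else p * (1 - α (-1)) * (∏ m' ∈ Finset.Icc (0 : ℤ) (s - 1), α m')

lemma numf_nat (mstar : ℕ) (p : ℝ) (α : ℤ → ℝ) (i : ℕ) :
    numf mstar p α (i : ℤ) = p * (1 - α (-1)) * piN α i := by
  unfold numf
  rw [if_neg (by omega), prod_Icc_piN]

lemma PInf_eq (mstar : ℕ) (α : ℤ → ℝ) :
    ∏ m' ∈ Finset.Icc (0 : ℤ) (mstar : ℤ), α m' = piN α (mstar + 1) := by
  have h : ((mstar : ℤ)) = ((mstar + 1 : ℕ) : ℤ) - 1 := by push_cast; ring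
  rw [h, prod_Icc_piN]

lemma Nd_eq (mstar : ℕ) (p : ℝ) (α : ℤ → ℝ) :
    Nd mstar p α = 1 - p * (1 - piN α (mstar + 1))
      + p * (1 - α (-1)) * ∑ i ∈ Finset.range (mstar + 1), piN α i := by
  unfold Nd
  rw [PInf_eq]
  congr 1
  congr 1
  have h : Finset.Icc (0 : ℤ) (mstar : ℤ) = insert (0 : ℤ) (Finset.Icc (1 : ℤ) (mstar : ℤ)) := by
    ext x; simp only [Finset.mem_Icc, Finset.mem_insert]; omega
  have h2 : ∑ m ∈ Finset.Icc (0 : ℤ) (mstar : ℤ), ∏ m' ∈ Finset.Icc (0 : ℤ) (m - 1), α m'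
      = 1 + ∑ m ∈ Finset.Icc (1 : ℤ) (mstar : ℤ), ∏ m' ∈ Finset.Icc (0 : ℤ) (m - 1), α m' := by
    rw [h, Finset.sum_insert (by simp)]
    norm_num
  have h3 : ∑ m ∈ Finset.Icc (0 : ℤ) (mstar : ℤ), ∏ m' ∈ Finset.Icc (0 : ℤ) (m - 1), α m'
      = ∑ i ∈ Finset.range (mstar + 1), piN α i := by
    rw [show ((mstar : ℤ)) = ((mstar + 1 : ℕ) : ℤ) - 1 by push_cast; ring, sum_Icc_int]
    exact Finset.sum_congr rfl fun i _ => prod_Icc_piN α i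
  rw [← h3, h2]

lemma Nd_pos {mstar : ℕ} {p : ℝ} {α : ℤ → ℝ} (hp0 : 0 ≤ p) (hp1 : p < 1)
    (hα : ValidDecision mstar α) : 0 < Nd mstar p α := by
  rw [Nd_eq]
  have h1 : 0 ≤ piN α (mstar + 1) := piN_nonneg hα le_rfl
  have h2 : 0 ≤ ∑ i ∈ Finset.range (mstar + 1), piN α i :=
    Finset.sum_nonneg fun i hi => piN_nonneg hα (by simp at hi; omega)
  have h3 := (hα (-1) (neg_one_mem mstar)).2
  nlinarith [mul_nonneg (mul_nonneg hp0 (by linarith : (0:ℝ) ≤ 1 - α (-1))) h2,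
    mul_nonneg hp0 h1]

lemma sd_eq_numf (mstar : ℕ) (p : ℝ) (α : ℤ → ℝ) (s : ℤ) :
    sd mstar p α s = numf mstar p α s / Nd mstar p α := by
  unfold sd numf
  by_cases h1 : s = -1
  · rw [if_pos h1, if_pos h1, PInf_eq]
  · rw [if_neg h1, if_neg h1]
    by_cases h2 : s = 0
    · rw [if_pos h2, h2]
      rw [show ((0:ℤ) - 1) = -1 by ring, Finset.Icc_eq_empty (by norm_num), Finset.prod_empty,
        mul_one]
    · rw [if_neg h2]

lemma sum_one_sub_numf {mstar : ℕ} {p : ℝ} (α : ℤ → ℝ) :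
    ∑ s ∈ SS mstar, (1 - α s) * numf mstar p α s = 1 - α (-1) := by
  rw [sum_SS]
  have h1 : ∀ i ∈ Finset.range (mstar + 1),
      (1 - α (i : ℤ)) * numf mstar p α (i : ℤ)
        = p * (1 - α (-1)) * (piN α i - piN α (i + 1)) := by
    intro i _
    rw [numf_nat, piN_succ]
    ring
  rw [Finset.sum_congr rfl h1, ← Finset.mul_sum]
  have h2 : ∑ i ∈ Finset.range (mstar + 1), (piN α i - piN α (i + 1))
      = piN α 0 - piN α (mstar + 1) := Finset.sum_range_sub' (piN α) (mstar + 1)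
  rw [h2]
  unfold numf
  rw [if_pos rfl]
  have : piN α 0 = 1 := by simp [piN]
  rw [this]
  ring

lemma sum_numf {mstar : ℕ} {p : ℝ} (α : ℤ → ℝ) :
    ∑ s ∈ SS mstar, numf mstar p α s = Nd mstar p α := by
  rw [sum_SS, Nd_eq]
  rw [Finset.sum_congr rfl (fun i _ => numf_nat mstar p α i), ← Finset.mul_sum]
  unfold numf
  rw [if_pos rfl]

lemma sum_T0_right (mstar : ℕ) (g : ℤ → ℝ) {s' : ℤ} (hs' : s' ∈ SS mstar) :
    ∑ s ∈ SS mstar, T0 mstar s' s * g s =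
      if s' = -1 then g (-1) + g (mstar : ℤ)
      else if s' = 0 then 0 else g (s' - 1) := by
  simp only [SS, Finset.mem_Icc] at hs'
  by_cases h1 : s' = -1
  · subst h1
    rw [if_pos rfl]
    have hcong : ∀ s ∈ SS mstar, T0 mstar (-1) s * g s =
        (if s = -1 then g s else 0) + (if s = (mstar:ℤ) then g s else 0) := by
      intro s hs
      simp only [SS, Finset.mem_Icc] at hs
      unfold T0
      split_ifs <;> first | (exfalso; omega) | (subst_vars; norm_num) | norm_num
    rw [Finset.sum_congr rfl hcong, Finset.sum_add_distrib, Finset.sum_ite_eq',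
      Finset.sum_ite_eq', if_pos (neg_one_mem mstar),
      if_pos (by exact_mod_cast nat_mem mstar le_rfl)]
  · rw [if_neg h1]
    by_cases h2 : s' = 0
    · subst h2
      rw [if_pos rfl]
      apply Finset.sum_eq_zero
      intro s hs
      simp only [SS, Finset.mem_Icc] at hs
      unfold T0
      split_ifs <;> first | (exfalso; first | omega | assumption) | norm_num
    · rw [if_neg h2]
      have hcong : ∀ s ∈ SS mstar, T0 mstar s' s * g s =
          (if s = s' - 1 then g s else 0) := by
        intro s hs
        simp only [SS, Finset.mem_Icc] at hs
        unfold T0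
        split_ifs <;> first | (exfalso; omega) | norm_num
      rw [Finset.sum_congr rfl hcong, Finset.sum_ite_eq',
        if_pos (by simp [SS, Finset.mem_Icc]; omega)]

lemma numf_neg_one (mstar : ℕ) (p : ℝ) (α : ℤ → ℝ) :
    numf mstar p α (-1) = 1 - p * (1 - piN α (mstar + 1)) := by
  unfold numf
  rw [if_pos rfl]

lemma numf_zero (mstar : ℕ) (p : ℝ) (α : ℤ → ℝ) :
    numf mstar p α 0 = p * (1 - α (-1)) := by
  have h : ((0:ℤ)) = ((0:ℕ) : ℤ) := rfl
  rw [h, numf_nat]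
  simp [piN]

lemma T1_at_neg_one (p : ℝ) (s : ℤ) : T1 p (-1) s = 1 - p := by
  unfold T1; rw [if_pos rfl]

lemma T1_at_zero (p : ℝ) (s : ℤ) : T1 p 0 s = p := by
  unfold T1; norm_num

lemma T1_at_other (p : ℝ) {s' : ℤ} (h1 : s' ≠ -1) (h2 : s' ≠ 0) (s : ℤ) : T1 p s' s = 0 := by
  unfold T1; rw [if_neg h1, if_neg h2]

lemma numf_stationary {mstar : ℕ} {p : ℝ} (α : ℤ → ℝ) {s' : ℤ} (hs' : s' ∈ SS mstar) :
    ∑ s ∈ SS mstar, Pd mstar p α s' s * numf mstar p α s = numf mstar p α s' := by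
  have hexp : ∀ s ∈ SS mstar, Pd mstar p α s' s * numf mstar p α s =
      T0 mstar s' s * (α s * numf mstar p α s) +
      T1 p s' (0:ℤ) * ((1 - α s) * numf mstar p α s) := by
    intro s _
    unfold Pd T1
    ring
  rw [Finset.sum_congr rfl hexp, Finset.sum_add_distrib, ← Finset.mul_sum,
    sum_one_sub_numf α, sum_T0_right mstar (fun s => α s * numf mstar p α s) hs']
  simp only [SS, Finset.mem_Icc] at hs'
  by_cases h1 : s' = -1
  · subst h1
    rw [if_pos rfl, T1_at_neg_one]
    simp only [numf_neg_one, numf_nat]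
    have hm : piN α (mstar + 1) = piN α mstar * α ((mstar : ℕ) : ℤ) := piN_succ α mstar
    rw [hm]
    ring
  · rw [if_neg h1]
    by_cases h2 : s' = 0
    · subst h2
      rw [if_pos rfl, T1_at_zero, numf_zero]
      ring
    · rw [if_neg h2, T1_at_other p h1 h2]
      obtain ⟨n, rfl⟩ : ∃ n : ℕ, s' = (n : ℤ) + 1 := ⟨(s' - 1).toNat, by omega⟩
      simp only [zero_mul, add_zero]
      rw [show ((n : ℤ) + 1 - 1) = ((n : ℕ) : ℤ) by ring, numf_nat]
      rw [show ((n : ℤ) + 1) = ((n + 1 : ℕ) : ℤ) by push_cast; ring, numf_nat, piN_succ]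
      ring

lemma sd_stationary {mstar : ℕ} {p : ℝ} {α : ℤ → ℝ} (hp0 : 0 ≤ p) (hp1 : p < 1)
    (hα : ValidDecision mstar α) {s' : ℤ} (hs' : s' ∈ SS mstar) :
    ∑ s ∈ SS mstar, Pd mstar p α s' s * sd mstar p α s = sd mstar p α s' := by
  simp_rw [sd_eq_numf, ← mul_div_assoc]
  rw [← Finset.sum_div, numf_stationary α hs']

lemma sd_sum {mstar : ℕ} {p : ℝ} {α : ℤ → ℝ} (hp0 : 0 ≤ p) (hp1 : p < 1)
    (hα : ValidDecision mstar α) : ∑ s ∈ SS mstar, sd mstar p α s = 1 := by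
  simp_rw [sd_eq_numf]
  rw [← Finset.sum_div, sum_numf, div_self (ne_of_gt (Nd_pos hp0 hp1 hα))]

end MCO
namespace MCO
open Finset Filter

section Conv

variable {mstar : ℕ} {p : ℝ} {α : ℤ → ℝ} {μ0 : ℤ → ℝ}

/-- total variation distance to the steady state -/
def distSS (mstar : ℕ) (p : ℝ) (α : ℤ → ℝ) (μ0 : ℤ → ℝ) (t : ℕ) : ℝ :=
  ∑ s ∈ SS mstar, |chainDist mstar p α μ0 t s - sd mstar p α s|

lemma distSS_nonneg (t : ℕ) : 0 ≤ distSS mstar p α μ0 t :=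
  Finset.sum_nonneg fun s _ => abs_nonneg _

lemma eta_sum_zero (hp0 : 0 ≤ p) (hp1 : p < 1) (hα : ValidDecision mstar α)
    (hμ0 : ValidInit mstar μ0) (t : ℕ) :
    ∑ s ∈ SS mstar, (chainDist mstar p α μ0 t s - sd mstar p α s) = 0 := by
  rw [Finset.sum_sub_distrib, chain_sum hμ0 t, sd_sum hp0 hp1 hα, sub_self]

lemma Mpow_stat (hp0 : 0 ≤ p) (hp1 : p < 1) (hα : ValidDecision mstar α) (k : ℕ)
    {s' : ℤ} (hs' : s' ∈ SS mstar) :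
    ∑ s ∈ SS mstar, Mpow mstar p α k s' s * sd mstar p α s = sd mstar p α s' := by
  induction k generalizing s' with
  | zero =>
    simp only [Mpow_zero]
    rw [Finset.sum_congr rfl (fun s _ => by rw [ite_mul, one_mul, zero_mul]),
      Finset.sum_ite_eq, if_pos hs']
  | succ k ih =>
    simp only [Mpow_succ]
    calc ∑ s ∈ SS mstar, (∑ s'' ∈ SS mstar, Mpow mstar p α k s' s'' * Pd mstar p α s'' s)
          * sd mstar p α s
        = ∑ s'' ∈ SS mstar, Mpow mstar p α k s' s''
            * ∑ s ∈ SS mstar, Pd mstar p α s'' s * sd mstar p α s := by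
          simp_rw [Finset.sum_mul, Finset.mul_sum]
          rw [Finset.sum_comm]
          exact Finset.sum_congr rfl fun s hs => Finset.sum_congr rfl fun s'' _ => by ring
      _ = ∑ s'' ∈ SS mstar, Mpow mstar p α k s' s'' * sd mstar p α s'' := by
          refine Finset.sum_congr rfl fun s'' hs'' => ?_
          rw [sd_stationary hp0 hp1 hα hs'']
      _ = sd mstar p α s' := ih hs'

lemma chain_sub_sd (hp0 : 0 ≤ p) (hp1 : p < 1) (hα : ValidDecision mstar α)
    (k t : ℕ) {s' : ℤ} (hs' : s' ∈ SS mstar) :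
    chainDist mstar p α μ0 (t + k) s' - sd mstar p α s' =
      ∑ s ∈ SS mstar, Mpow mstar p α k s' s *
        (chainDist mstar p α μ0 t s - sd mstar p α s) := by
  rw [chain_Mpow mstar p α μ0 k t hs']
  rw [show (∑ s ∈ SS mstar, Mpow mstar p α k s' s *
      (chainDist mstar p α μ0 t s - sd mstar p α s))
    = ∑ s ∈ SS mstar, (Mpow mstar p α k s' s * chainDist mstar p α μ0 t s
        - Mpow mstar p α k s' s * sd mstar p α s) from
    Finset.sum_congr rfl fun s _ => by ring]
  rw [Finset.sum_sub_distrib, Mpow_stat hp0 hp1 hα k hs']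

/-- Generic contraction: if `Mpow k (-1) s ≥ δ ≥ 0` for all `s` and the signed measure `η`
sums to zero, the TV norm contracts by `1 - δ`. -/
lemma dist_contract_general (hp0 : 0 ≤ p) (hp1 : p ≤ 1) (hp1' : p < 1)
    (hα : ValidDecision mstar α) (hμ0 : ValidInit mstar μ0) (k t : ℕ) {δ : ℝ}
    (hδ0 : 0 ≤ δ) (hδ : ∀ s ∈ SS mstar, δ ≤ Mpow mstar p α k (-1) s) :
    distSS mstar p α μ0 (t + k) ≤ (1 - δ) * distSS mstar p α μ0 t := by
  unfold distSS
  have key : ∀ s' ∈ SS mstar,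
      |chainDist mstar p α μ0 (t + k) s' - sd mstar p α s'| ≤
        ∑ s ∈ SS mstar, (Mpow mstar p α k s' s - (if s' = -1 then δ else 0)) *
          |chainDist mstar p α μ0 t s - sd mstar p α s| := by
    intro s' hs'
    rw [chain_sub_sd hp0 hp1' hα k t hs']
    have hzero : ∑ s ∈ SS mstar, (if s' = -1 then δ else 0) *
        (chainDist mstar p α μ0 t s - sd mstar p α s) = 0 := by
      rw [← Finset.mul_sum, eta_sum_zero hp0 hp1' hα hμ0 t, mul_zero]
    have hrw : ∑ s ∈ SS mstar, Mpow mstar p α k s' s *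
        (chainDist mstar p α μ0 t s - sd mstar p α s)
        = ∑ s ∈ SS mstar, (Mpow mstar p α k s' s - (if s' = -1 then δ else 0)) *
          (chainDist mstar p α μ0 t s - sd mstar p α s) := by
      rw [Finset.sum_congr rfl (fun s _ => by
        rw [sub_mul] : ∀ s ∈ SS mstar, (Mpow mstar p α k s' s - (if s' = -1 then δ else 0)) *
          (chainDist mstar p α μ0 t s - sd mstar p α s) =
          Mpow mstar p α k s' s * (chainDist mstar p α μ0 t s - sd mstar p α s)
          - (if s' = -1 then δ else 0) * (chainDist mstar p α μ0 t s - sd mstar p α s))]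
      rw [Finset.sum_sub_distrib, hzero, sub_zero]
    rw [hrw]
    refine (Finset.abs_sum_le_sum_abs _ _).trans ?_
    refine Finset.sum_le_sum fun s hs => ?_
    rw [abs_mul]
    have hnn : 0 ≤ Mpow mstar p α k s' s - (if s' = -1 then δ else 0) := by
      split_ifs with h
      · subst h
        linarith [hδ s hs]
      · simpa using Mpow_nonneg hp0 hp1 hα k s' hs
    rw [abs_of_nonneg hnn]
  refine (Finset.sum_le_sum key).trans ?_
  rw [Finset.sum_comm]
  have hcol : ∀ s ∈ SS mstar,
      ∑ s' ∈ SS mstar, (Mpow mstar p α k s' s - (if s' = -1 then δ else 0)) *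
        |chainDist mstar p α μ0 t s - sd mstar p α s|
      = (1 - δ) * |chainDist mstar p α μ0 t s - sd mstar p α s| := by
    intro s hs
    rw [← Finset.sum_mul]
    congr 1
    rw [Finset.sum_sub_distrib, Mpow_colsum α k hs, Finset.sum_ite_eq',
      if_pos (neg_one_mem mstar)]
  rw [Finset.sum_congr rfl hcol, ← Finset.mul_sum]

lemma distSS_le (hp0 : 0 ≤ p) (hp1 : p ≤ 1) (hp1' : p < 1)
    (hα : ValidDecision mstar α) (hμ0 : ValidInit mstar μ0) (t k : ℕ) :
    distSS mstar p α μ0 (t + k) ≤ distSS mstar p α μ0 t := by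
  have h := dist_contract_general hp0 hp1 hp1' hα hμ0 k t (le_refl 0)
    (fun s hs => Mpow_nonneg hp0 hp1 hα k (-1) hs)
  simpa using h

lemma distSS_contract (hp0 : 0 ≤ p) (hp1 : p ≤ 1) (hp1' : p < 1)
    (hα : ValidDecision mstar α) (hμ0 : ValidInit mstar μ0) (t : ℕ) :
    distSS mstar p α μ0 (t + (mstar + 1)) ≤
      (1 - (1 - p) ^ (mstar + 1)) * distSS mstar p α μ0 t :=
  dist_contract_general hp0 hp1 hp1' hα hμ0 (mstar + 1) t
    (pow_nonneg (by linarith) _) (fun s hs => doeblin hp0 hp1 hα hs)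

lemma distSS_tendsto (hp0 : 0 < p) (hp1 : p < 1) (hα : ValidDecision mstar α)
    (hμ0 : ValidInit mstar μ0) :
    Tendsto (distSS mstar p α μ0) atTop (nhds 0) := by
  set k0 := mstar + 1 with hk0
  set r := 1 - (1 - p) ^ k0 with hr
  have hp0' : (0:ℝ) ≤ p := le_of_lt hp0
  have hp1'' : p ≤ 1 := le_of_lt hp1
  have hr0 : 0 ≤ r := by
    have : (1 - p) ^ k0 ≤ 1 := pow_le_one₀ (by linarith) (by linarith)
    simp [hr]; linarith
  have hr1 : r < 1 := by
    have : 0 < (1 - p) ^ k0 := pow_pos (by linarith) _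
    simp [hr]; linarith
  have hgeom : ∀ n : ℕ, distSS mstar p α μ0 (k0 * n) ≤ r ^ n * distSS mstar p α μ0 0 := by
    intro n
    induction n with
    | zero => simp
    | succ n ih =>
      have h1 : k0 * (n + 1) = k0 * n + k0 := by ring
      rw [h1]
      calc distSS mstar p α μ0 (k0 * n + k0)
          ≤ r * distSS mstar p α μ0 (k0 * n) :=
            distSS_contract hp0' hp1'' hp1 hα hμ0 (k0 * n)
        _ ≤ r * (r ^ n * distSS mstar p α μ0 0) := by
            exact mul_le_mul_of_nonneg_left ih hr0
        _ = r ^ (n + 1) * distSS mstar p α μ0 0 := by ring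
  have hbound : ∀ t : ℕ, distSS mstar p α μ0 t ≤ r ^ (t / k0) * distSS mstar p α μ0 0 := by
    intro t
    have h1 : t = k0 * (t / k0) + t % k0 := (Nat.div_add_mod t k0).symm
    calc distSS mstar p α μ0 t = distSS mstar p α μ0 (k0 * (t / k0) + t % k0) := by rw [← h1]
      _ ≤ distSS mstar p α μ0 (k0 * (t / k0)) := distSS_le hp0' hp1'' hp1 hα hμ0 _ _
      _ ≤ r ^ (t / k0) * distSS mstar p α μ0 0 := hgeom _
  have hdiv : Tendsto (fun t : ℕ => t / k0) atTop atTop := by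
    apply tendsto_atTop_atTop.2
    intro b
    refine ⟨k0 * b, fun a ha => ?_⟩
    rw [Nat.le_div_iff_mul_le (by omega : 0 < k0), mul_comm]
    exact ha
  have hpow : Tendsto (fun t : ℕ => r ^ (t / k0) * distSS mstar p α μ0 0) atTop (nhds 0) := by
    have h1 : Tendsto (fun t : ℕ => r ^ (t / k0)) atTop (nhds 0) :=
      (tendsto_pow_atTop_nhds_zero_of_lt_one hr0 hr1).comp hdiv
    have := h1.mul_const (distSS mstar p α μ0 0)
    simpa using this
  exact squeeze_zero distSS_nonneg hbound hpow

lemma Ftil_tendsto {f : ℤ → ℝ} (hp0 : 0 < p) (hp1 : p < 1)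
    (hf : ∀ m ∈ Finset.Icc (-1 : ℤ) (mstar : ℤ), 0 ≤ f m ∧ f m ≤ 1)
    (hα : ValidDecision mstar α) (hμ0 : ValidInit mstar μ0) :
    Tendsto (Ftil mstar p α μ0 f) atTop
      (nhds (∑ m ∈ Finset.Icc (0 : ℤ) (mstar : ℤ), f m * sd mstar p α m)) := by
  rw [tendsto_iff_norm_sub_tendsto_zero]
  apply squeeze_zero (fun t => norm_nonneg _) (g := distSS mstar p α μ0)
  · intro t
    unfold Ftil
    rw [Real.norm_eq_abs, ← Finset.sum_sub_distrib]
    have h1 : ∀ m ∈ Finset.Icc (0:ℤ) (mstar:ℤ),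
        f m * chainDist mstar p α μ0 t m - f m * sd mstar p α m
        = f m * (chainDist mstar p α μ0 t m - sd mstar p α m) := fun m _ => by ring
    rw [Finset.sum_congr rfl h1]
    refine (Finset.abs_sum_le_sum_abs _ _).trans ?_
    have h2 : ∀ m ∈ Finset.Icc (0:ℤ) (mstar:ℤ),
        |f m * (chainDist mstar p α μ0 t m - sd mstar p α m)|
        ≤ |chainDist mstar p α μ0 t m - sd mstar p α m| := by
      intro m hm
      rw [abs_mul]
      have hmem : m ∈ SS mstar := by
        simp only [SS, Finset.mem_Icc]
        simp only [Finset.mem_Icc] at hm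
        omega
      have hfm := hf m hmem
      have : |f m| ≤ 1 := abs_le.2 ⟨by linarith [hfm.1], hfm.2⟩
      nlinarith [abs_nonneg (chainDist mstar p α μ0 t m - sd mstar p α m)]
    refine (Finset.sum_le_sum h2).trans ?_
    unfold distSS
    apply Finset.sum_le_sum_of_subset_of_nonneg
    · intro x hx
      simp only [Finset.mem_Icc] at hx
      simp only [SS, Finset.mem_Icc]
      omega
    · intro s _ _
      exact abs_nonneg _
  · exact distSS_tendsto hp0 hp1 hα hμ0

end Conv

end MCO
namespace MCO
open Finset

lemma abel (α : ℤ → ℝ) (g : ℕ → ℝ) (K : ℕ) :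
    ∑ m ∈ Finset.range K, g m * piN α m
      = (∑ t ∈ Finset.range K, (piN α t - piN α (t + 1)) * (∑ i ∈ Finset.range (t + 1), g i))
        + piN α K * ∑ i ∈ Finset.range K, g i := by
  induction K with
  | zero => simp [piN]
  | succ K ih =>
    rw [Finset.sum_range_succ (fun m => g m * piN α m) K, ih,
      Finset.sum_range_succ (fun t => (piN α t - piN α (t + 1)) * (∑ i ∈ Finset.range (t + 1), g i)) K,
      Finset.sum_range_succ g K]
    ring

lemma Fss_eq (mstar : ℕ) (p : ℝ) (α : ℤ → ℝ) (f : ℤ → ℝ) :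
    ∑ m ∈ Finset.Icc (0 : ℤ) (mstar : ℤ), f m * sd mstar p α m
      = p * (1 - α (-1)) * (∑ i ∈ Finset.range (mstar + 1), f (i : ℤ) * piN α i)
          / Nd mstar p α := by
  rw [sum_Icc_int']
  have h : ∀ i ∈ Finset.range (mstar + 1), f (i : ℤ) * sd mstar p α (i : ℤ)
      = (p * (1 - α (-1)) * (f (i : ℤ) * piN α i)) / Nd mstar p α := by
    intro i _
    rw [sd_eq_numf, numf_nat]
    ring
  rw [Finset.sum_congr rfl h, ← Finset.sum_div, ← Finset.mul_sum]

lemma steady_le_V {mstar : ℕ} {p : ℝ} {α : ℤ → ℝ} {f : ℤ → ℝ}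
    (hp0 : 0 < p) (hp1 : p < 1) (hα : ValidDecision mstar α)
    (hf : ∀ m ∈ Finset.Icc (-1 : ℤ) (mstar : ℤ), 0 ≤ f m ∧ f m ≤ 1) :
    ∑ m ∈ Finset.Icc (0 : ℤ) (mstar : ℤ), f m * sd mstar p α m ≤
      (Finset.Icc 0 mstar).sup' (Finset.nonempty_Icc.2 (Nat.zero_le mstar))
        (fun tstar => p / (1 + tstar * p) * ∑ m ∈ Finset.Icc (0 : ℤ) (tstar : ℤ), f m) := by
  set V := (Finset.Icc 0 mstar).sup' (Finset.nonempty_Icc.2 (Nat.zero_le mstar))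
      (fun tstar => p / (1 + tstar * p) * ∑ m ∈ Finset.Icc (0 : ℤ) (tstar : ℤ), f m) with hVdef
  have hβ0 : 0 ≤ 1 - α (-1) := by linarith [(hα (-1) (neg_one_mem mstar)).2]
  have hβ1 : 1 - α (-1) ≤ 1 := by linarith [(hα (-1) (neg_one_mem mstar)).1]
  -- value bound from the sup
  have hV_t : ∀ t : ℕ, t ≤ mstar →
      p * (∑ i ∈ Finset.range (t + 1), f (i : ℤ)) ≤ V * (1 + (t : ℝ) * p) := by
    intro t ht
    have hmem : t ∈ Finset.Icc 0 mstar := by simp [ht]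
    have h1 := Finset.le_sup'
      (fun tstar : ℕ => p / (1 + tstar * p) * ∑ m ∈ Finset.Icc (0 : ℤ) (tstar : ℤ), f m) hmem
    rw [← hVdef] at h1
    rw [sum_Icc_int'] at h1
    have hpos : (0:ℝ) < 1 + (t : ℝ) * p := by positivity
    rw [div_mul_eq_mul_div, div_le_iff₀ hpos] at h1
    linarith
  have hV0 : 0 ≤ V := by
    have hmem : 0 ∈ Finset.Icc 0 mstar := by simp
    have h1 := Finset.le_sup'
      (fun tstar : ℕ => p / (1 + tstar * p) * ∑ m ∈ Finset.Icc (0 : ℤ) (tstar : ℤ), f m) hmem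
    rw [← hVdef] at h1
    refine le_trans ?_ h1
    apply mul_nonneg
    · positivity
    · apply Finset.sum_nonneg
      intro m hm
      refine (hf m ?_).1
      simp only [Finset.mem_Icc] at hm ⊢
      omega
  -- nonnegativity facts about piN
  have hw : ∀ t ∈ Finset.range (mstar + 1), 0 ≤ piN α t - piN α (t + 1) := by
    intro t ht
    simp only [Finset.mem_range] at ht
    linarith [piN_antitone hα (n := t) (by omega)]
  have hπK : 0 ≤ piN α (mstar + 1) := piN_nonneg hα le_rfl
  have hπK1 : piN α (mstar + 1) ≤ 1 := piN_le_one hα le_rfl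
  -- main computation
  rw [Fss_eq, div_le_iff₀ (Nd_pos (le_of_lt hp0) hp1 hα)]
  have habel := abel α (fun i => f (i : ℤ)) (mstar + 1)
  have habel1 := abel α (fun _ => (1:ℝ)) (mstar + 1)
  simp only [one_mul, Finset.sum_const, Finset.card_range, nsmul_eq_mul, mul_one] at habel1
  -- habel1 : ∑ π = ∑ w (t+1) + π_K * K
  have hsum1 : ∑ t ∈ Finset.range (mstar + 1), (piN α t - piN α (t + 1))
      = 1 - piN α (mstar + 1) := by
    rw [Finset.sum_range_sub' (piN α) (mstar + 1)]
    simp [piN]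
  -- bound the Abel form
  have hterm : ∀ t ∈ Finset.range (mstar + 1),
      (piN α t - piN α (t + 1)) * (p * ∑ i ∈ Finset.range (t + 1), f (i : ℤ))
        ≤ (piN α t - piN α (t + 1)) * (V * (1 + (t : ℝ) * p)) := by
    intro t ht
    simp only [Finset.mem_range] at ht
    exact mul_le_mul_of_nonneg_left (hV_t t (by omega)) (hw t (by simp [Finset.mem_range]; omega))
  have htail : piN α (mstar + 1) * (p * ∑ i ∈ Finset.range (mstar + 1), f (i : ℤ))
      ≤ piN α (mstar + 1) * (V * (1 + (mstar : ℝ) * p)) := by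
    have := hV_t mstar le_rfl
    exact mul_le_mul_of_nonneg_left this hπK
  -- expand the V-side sum
  have hexp : ∑ t ∈ Finset.range (mstar + 1),
      (piN α t - piN α (t + 1)) * (V * (1 + (t : ℝ) * p))
      = V * (1 - p) * (1 - piN α (mstar + 1))
        + V * p * ((∑ t ∈ Finset.range (mstar + 1),
            (piN α t - piN α (t + 1)) * ((t : ℝ) + 1))) := by
    have e : ∀ t ∈ Finset.range (mstar + 1),
        (piN α t - piN α (t + 1)) * (V * (1 + (t : ℝ) * p))
          = V * (1 - p) * (piN α t - piN α (t + 1))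
            + V * p * ((piN α t - piN α (t + 1)) * ((t : ℝ) + 1)) := by
      intro t _
      ring
    rw [Finset.sum_congr rfl e, Finset.sum_add_distrib, ← Finset.mul_sum, ← Finset.mul_sum,
      hsum1]
  -- identify ∑ w (t+1) via habel1
  have hwt1 : ∑ t ∈ Finset.range (mstar + 1), (piN α t - piN α (t + 1)) * ((t : ℝ) + 1)
      = (∑ i ∈ Finset.range (mstar + 1), piN α i)
        - piN α (mstar + 1) * ((mstar : ℝ) + 1) := by
    have h2 : ∀ t ∈ Finset.range (mstar + 1),
        (piN α t - piN α (t + 1)) * (((t + 1 : ℕ)) : ℝ)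
          = (piN α t - piN α (t + 1)) * ((t : ℝ) + 1) := by
      intro t _
      push_cast
      ring
    rw [Finset.sum_congr rfl h2] at habel1
    have h3 : ((mstar + 1 : ℕ) : ℝ) = (mstar : ℝ) + 1 := by push_cast; ring
    rw [h3] at habel1
    linarith
  -- put everything together
  calc p * (1 - α (-1)) * (∑ i ∈ Finset.range (mstar + 1), f (i : ℤ) * piN α i)
      = (1 - α (-1)) * ((∑ t ∈ Finset.range (mstar + 1),
            (piN α t - piN α (t + 1)) * (p * ∑ i ∈ Finset.range (t + 1), f (i : ℤ)))
          + piN α (mstar + 1) * (p * ∑ i ∈ Finset.range (mstar + 1), f (i : ℤ))) := by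
        rw [habel]
        have eA : p * (1 - α (-1)) * (∑ t ∈ Finset.range (mstar + 1),
              (piN α t - piN α (t + 1)) * (∑ i ∈ Finset.range (t + 1), f (i : ℤ)))
            = (1 - α (-1)) * (∑ t ∈ Finset.range (mstar + 1),
              (piN α t - piN α (t + 1)) * (p * ∑ i ∈ Finset.range (t + 1), f (i : ℤ))) := by
          rw [Finset.mul_sum, Finset.mul_sum]
          exact Finset.sum_congr rfl fun t _ => by ring
        linear_combination eA
    _ ≤ (1 - α (-1)) * ((∑ t ∈ Finset.range (mstar + 1),
            (piN α t - piN α (t + 1)) * (V * (1 + (t : ℝ) * p)))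
          + piN α (mstar + 1) * (V * (1 + (mstar : ℝ) * p))) := by
        apply mul_le_mul_of_nonneg_left _ hβ0
        exact add_le_add (Finset.sum_le_sum hterm) htail
    _ = (1 - α (-1)) * (V * ((1 - p)
          + p * (∑ i ∈ Finset.range (mstar + 1), piN α i))) := by
        rw [hexp, hwt1]
        ring
    _ ≤ V * Nd mstar p α := by
        rw [Nd_eq]
        have hD1 : 0 ≤ ∑ i ∈ Finset.range (mstar + 1), piN α i :=
          Finset.sum_nonneg fun i hi => piN_nonneg hα (by simp at hi; omega)
        nlinarith [mul_nonneg hV0 (mul_nonneg (le_of_lt hp0) hπK),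
          mul_nonneg (mul_nonneg hV0 (by linarith : (0:ℝ) ≤ 1 - (1 - α (-1)))) (by linarith : (0:ℝ) ≤ 1 - p),
          mul_nonneg hV0 (mul_nonneg (le_of_lt hp0) hD1)]

end MCO
namespace MCO
open Finset Filter

lemma cutoff_valid (mstar tstar : ℕ) : ValidDecision mstar (cutoffDecision tstar) := by
  intro s _
  unfold cutoffDecision
  split_ifs <;> norm_num

lemma cutoff_neg_one (tstar : ℕ) : cutoffDecision tstar (-1) = 0 := by
  unfold cutoffDecision
  rw [if_neg (by omega)]

lemma piN_cutoff (tstar n : ℕ) :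
    piN (cutoffDecision tstar) n = if n ≤ tstar then 1 else 0 := by
  induction n with
  | zero => simp [piN]
  | succ n ih =>
    rw [piN_succ, ih]
    unfold cutoffDecision
    split_ifs <;> first | (exfalso; omega) | norm_num

lemma Nd_cutoff {mstar tstar : ℕ} (p : ℝ) (ht : tstar ≤ mstar) :
    Nd mstar p (cutoffDecision tstar) = 1 + (tstar : ℝ) * p := by
  rw [Nd_eq, cutoff_neg_one, piN_cutoff, if_neg (by omega)]
  have hs : ∑ i ∈ Finset.range (mstar + 1), piN (cutoffDecision tstar) i
      = ((tstar + 1 : ℕ) : ℝ) := by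
    rw [Finset.sum_congr rfl (fun i _ => piN_cutoff tstar i), Finset.sum_boole]
    congr 1
    rw [show (Finset.range (mstar + 1)).filter (fun i => i ≤ tstar)
      = Finset.range (tstar + 1) by ext i; simp [Finset.mem_filter, Finset.mem_range]; omega]
    rw [Finset.card_range]
  rw [hs]
  push_cast
  ring

lemma Fss_cutoff {mstar tstar : ℕ} (p : ℝ) (f : ℤ → ℝ) (ht : tstar ≤ mstar) :
    ∑ m ∈ Finset.Icc (0 : ℤ) (mstar : ℤ), f m * sd mstar p (cutoffDecision tstar) m
      = p / (1 + (tstar : ℝ) * p) * ∑ m ∈ Finset.Icc (0 : ℤ) (tstar : ℤ), f m := by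
  rw [Fss_eq, cutoff_neg_one, Nd_cutoff p ht]
  have hsum : ∑ i ∈ Finset.range (mstar + 1), f (i : ℤ) * piN (cutoffDecision tstar) i
      = ∑ i ∈ Finset.range (tstar + 1), f (i : ℤ) := by
    rw [Finset.sum_congr rfl (fun i _ => by rw [piN_cutoff])]
    rw [← Finset.sum_subset (Finset.range_subset_range.2 (by omega : tstar + 1 ≤ mstar + 1))
      (fun x hx hx2 => by
        simp only [Finset.mem_range] at hx hx2
        rw [if_neg (by omega), mul_zero])]
    exact Finset.sum_congr rfl fun i hi => by
      simp only [Finset.mem_range] at hi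
      rw [if_pos (by omega), mul_one]
  rw [hsum, sum_Icc_int']
  ring

end MCO

/-- **Optimality of the memory-cutoff policy in the steady-state limit**: the supremum,
over all decision functions `d`, of the steady-state value of an elementary link is
`max_{t* ∈ {0,…,m*}} (p/(1+t*p)) ∑_{m=0}^{t*} f(m)`, and it is attained; in particular,
it is attained by a memory-cutoff policy. -/
theorem memory_cutoff_optimal (mstar : ℕ) (p : ℝ) (hp0 : 0 < p) (hp1 : p < 1)
    (f : ℤ → ℝ) (hf0 : f (-1) = 0)
    (hf : ∀ m ∈ Finset.Icc (-1 : ℤ) (mstar : ℤ), 0 ≤ f m ∧ f m ≤ 1)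
    (μ0 : ℤ → ℝ) (hμ0 : ValidInit mstar μ0) :
    IsGreatest
      {L : ℝ | ∃ α : ℤ → ℝ, ValidDecision mstar α ∧
        Tendsto (Ftil mstar p α μ0 f) atTop (nhds L)}
      ((Finset.Icc 0 mstar).sup' (Finset.nonempty_Icc.2 (Nat.zero_le mstar))
        (fun tstar => p / (1 + tstar * p) * ∑ m ∈ Finset.Icc (0 : ℤ) (tstar : ℤ), f m)) ∧
    ∃ tstar : ℕ, tstar ≤ mstar ∧
      Tendsto (Ftil mstar p (cutoffDecision tstar) μ0 f) atTop
        (nhds ((Finset.Icc 0 mstar).sup' (Finset.nonempty_Icc.2 (Nat.zero_le mstar))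
          (fun t' => p / (1 + t' * p) * ∑ m ∈ Finset.Icc (0 : ℤ) (t' : ℤ), f m))) := by
  obtain ⟨t0, ht0mem, ht0eq⟩ := Finset.exists_mem_eq_sup'
    (Finset.nonempty_Icc.2 (Nat.zero_le mstar))
    (fun tstar : ℕ => p / (1 + tstar * p) * ∑ m ∈ Finset.Icc (0 : ℤ) (tstar : ℤ), f m)
  have ht0 : t0 ≤ mstar := (Finset.mem_Icc.1 ht0mem).2
  have hcut : Tendsto (Ftil mstar p (cutoffDecision t0) μ0 f) atTop
      (nhds (p / (1 + (t0 : ℝ) * p) * ∑ m ∈ Finset.Icc (0 : ℤ) (t0 : ℤ), f m)) := by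
    have h := MCO.Ftil_tendsto (α := cutoffDecision t0) hp0 hp1 hf
      (MCO.cutoff_valid mstar t0) hμ0
    rwa [MCO.Fss_cutoff p f ht0] at h
  refine ⟨⟨⟨cutoffDecision t0, MCO.cutoff_valid mstar t0, by rw [ht0eq]; exact hcut⟩, ?_⟩,
    ⟨t0, ht0, by rw [ht0eq]; exact hcut⟩⟩
  intro L hL
  obtain ⟨α, hα, hT⟩ := hL
  have h2 := MCO.Ftil_tendsto (α := α) hp0 hp1 hf hα hμ0
  have hLeq : L = ∑ m ∈ Finset.Icc (0 : ℤ) (mstar : ℤ), f m * sd mstar p α m :=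
    tendsto_nhds_unique hT h2
  rw [hLeq]
  exact MCO.steady_le_V hp0 hp1 hα hf
end
end

section
/- Steady-state values of the memory-cutoff policy: let p ∈ (0,1), m* ∈ ℕ, t* ∈ {0,1,…,m*}, and f : {−1,0,…,m*} → ℝ with f(−1) = 0, and let d^{t*} be the memory-cutoff decision function. Then for any initial distribution, lim_{t→∞} F̃^{t*}(t) = (p/(1 + t*·p)) ∑_{m=0}^{t*} f(m) and lim_{t→∞} X^{t*}(t) = (t*+1)·p/(1 + t*·p), where X^{t*}(t) := 1 − Pr[M(t) = −1] is the probability that the elementary link is active at time t under the stationary policy (d^{t*}, d^{t*}, …). -/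
open BigOperators Filter

noncomputable section

def Bseq (mstar tstar : ℕ) (p : ℝ) (μ0 : ℤ → ℝ) (t : ℕ) : ℝ :=
  ∑ s ∈ (Finset.Icc (-1 : ℤ) (mstar : ℤ)).filter (fun s => ¬(0 ≤ s ∧ s ≤ (tstar : ℤ) - 1)),
    chainDist mstar p (cutoffDecision tstar) μ0 t s

lemma Pd_cut (mstar tstar : ℕ) (p : ℝ) (hts : tstar ≤ mstar) (s : ℤ) (hs : -1 ≤ s) (s' : ℤ) :
    Pd mstar p (cutoffDecision tstar) s' s =
      if 0 ≤ s ∧ s ≤ (tstar : ℤ) - 1 then (if s' = s + 1 then 1 else 0)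
      else (if s' = -1 then 1 - p else if s' = 0 then p else 0) := by
  unfold Pd cutoffDecision T0 T1
  by_cases h : 0 ≤ s ∧ s ≤ (tstar : ℤ) - 1
  · have hs1 : s ≠ -1 := by omega
    have hs2 : s ≠ (mstar : ℤ) := by omega
    simp [h, hs1, hs2]
  · have h' : ¬(0 ≤ s ∧ s < (tstar : ℤ)) := by omega
    simp [h, h']

lemma Pd_nonneg_s5 (mstar tstar : ℕ) (p : ℝ) (hts : tstar ≤ mstar) (hp0 : 0 < p) (hp1 : p < 1)
    (s : ℤ) (hs : -1 ≤ s) (s' : ℤ) : 0 ≤ Pd mstar p (cutoffDecision tstar) s' s := by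
  rw [Pd_cut mstar tstar p hts s hs s']
  split_ifs <;> linarith

lemma mu_nonneg (mstar tstar : ℕ) (p : ℝ) (hts : tstar ≤ mstar) (hp0 : 0 < p) (hp1 : p < 1)
    (μ0 : ℤ → ℝ) (hμ0 : ValidInit mstar μ0) :
    ∀ t, ∀ s ∈ Finset.Icc (-1 : ℤ) (mstar : ℤ), 0 ≤ chainDist mstar p (cutoffDecision tstar) μ0 t s := by
  intro t
  induction t with
  | zero => exact hμ0.1
  | succ t ih =>
    intro s' _
    show (0:ℝ) ≤ ∑ s ∈ Finset.Icc (-1 : ℤ) (mstar : ℤ), _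
    apply Finset.sum_nonneg
    intro s hs
    have hs' : -1 ≤ s := (Finset.mem_Icc.1 hs).1
    exact mul_nonneg (Pd_nonneg_s5 mstar tstar p hts hp0 hp1 s hs' s') (ih s hs)

lemma mu_sum_one (mstar tstar : ℕ) (p : ℝ) (hts : tstar ≤ mstar)
    (μ0 : ℤ → ℝ) (hμ0 : ValidInit mstar μ0) :
    ∀ t, ∑ s ∈ Finset.Icc (-1 : ℤ) (mstar : ℤ), chainDist mstar p (cutoffDecision tstar) μ0 t s = 1 := by
  intro t
  induction t with
  | zero => exact hμ0.2
  | succ t ih =>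
    show ∑ s' ∈ Finset.Icc (-1 : ℤ) (mstar : ℤ), ∑ s ∈ Finset.Icc (-1 : ℤ) (mstar : ℤ),
        Pd mstar p (cutoffDecision tstar) s' s * chainDist mstar p (cutoffDecision tstar) μ0 t s = 1
    rw [Finset.sum_comm]
    have key : ∀ s ∈ Finset.Icc (-1 : ℤ) (mstar : ℤ),
        ∑ s' ∈ Finset.Icc (-1 : ℤ) (mstar : ℤ),
          Pd mstar p (cutoffDecision tstar) s' s * chainDist mstar p (cutoffDecision tstar) μ0 t s
        = chainDist mstar p (cutoffDecision tstar) μ0 t s := by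
      intro s hs
      rw [← Finset.sum_mul]
      have hcol : ∑ s' ∈ Finset.Icc (-1 : ℤ) (mstar : ℤ),
          Pd mstar p (cutoffDecision tstar) s' s = 1 := by
        have hs1 : -1 ≤ s := (Finset.mem_Icc.1 hs).1
        have hs2 : s ≤ (mstar : ℤ) := (Finset.mem_Icc.1 hs).2
        rw [Finset.sum_congr rfl (fun s' _ => Pd_cut mstar tstar p hts s hs1 s')]
        by_cases h : 0 ≤ s ∧ s ≤ (tstar : ℤ) - 1
        · rw [Finset.sum_congr rfl (fun s' (_ : s' ∈ Finset.Icc (-1:ℤ) (mstar:ℤ)) => if_pos h)]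
          rw [Finset.sum_ite_eq' (Finset.Icc (-1:ℤ) (mstar:ℤ)) (s+1) (fun _ => (1:ℝ))]
          have : s + 1 ∈ Finset.Icc (-1:ℤ) (mstar:ℤ) := by
            rw [Finset.mem_Icc]; omega
          simp [this]
        · rw [Finset.sum_congr rfl (fun s' (_ : s' ∈ Finset.Icc (-1:ℤ) (mstar:ℤ)) => if_neg h)]
          have hpt : ∀ s' : ℤ, (if s' = -1 then 1 - p else if s' = 0 then p else (0:ℝ))
              = (1 - p) * (if s' = (-1:ℤ) then (1:ℝ) else 0) + p * (if s' = (0:ℤ) then (1:ℝ) else 0) := by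
            intro s'
            split_ifs with h1 h2 <;> simp_all <;> ring
          rw [Finset.sum_congr rfl (fun s' _ => hpt s')]
          rw [Finset.sum_add_distrib, ← Finset.mul_sum, ← Finset.mul_sum,
            Finset.sum_ite_eq' (Finset.Icc (-1:ℤ) (mstar:ℤ)) (-1 : ℤ) (fun _ => (1:ℝ)),
            Finset.sum_ite_eq' (Finset.Icc (-1:ℤ) (mstar:ℤ)) (0 : ℤ) (fun _ => (1:ℝ))]
          have h1 : (-1 : ℤ) ∈ Finset.Icc (-1:ℤ) (mstar:ℤ) := by rw [Finset.mem_Icc]; omega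
          have h2 : (0 : ℤ) ∈ Finset.Icc (-1:ℤ) (mstar:ℤ) := by rw [Finset.mem_Icc]; omega
          simp [h1, h2]
      rw [hcol, one_mul]
    rw [Finset.sum_congr rfl key, ih]

lemma mu_neg1 (mstar tstar : ℕ) (p : ℝ) (hts : tstar ≤ mstar) (μ0 : ℤ → ℝ) (t : ℕ) :
    chainDist mstar p (cutoffDecision tstar) μ0 (t+1) (-1) = (1 - p) * Bseq mstar tstar p μ0 t := by
  show ∑ s ∈ Finset.Icc (-1 : ℤ) (mstar : ℤ), _ = _
  have key : ∀ s ∈ Finset.Icc (-1 : ℤ) (mstar : ℤ),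
      Pd mstar p (cutoffDecision tstar) (-1) s * chainDist mstar p (cutoffDecision tstar) μ0 t s
      = if 0 ≤ s ∧ s ≤ (tstar : ℤ) - 1 then 0
        else (1 - p) * chainDist mstar p (cutoffDecision tstar) μ0 t s := by
    intro s hs
    have hs1 : -1 ≤ s := (Finset.mem_Icc.1 hs).1
    rw [Pd_cut mstar tstar p hts s hs1 (-1)]
    by_cases h : 0 ≤ s ∧ s ≤ (tstar : ℤ) - 1
    · rw [if_pos h, if_pos h, if_neg (by omega : ¬ (-1 : ℤ) = s + 1)]
      ring
    · rw [if_neg h, if_neg h, if_pos rfl]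
  rw [Finset.sum_congr rfl key]
  rw [Bseq, Finset.mul_sum, Finset.sum_filter]
  apply Finset.sum_congr rfl
  intro s _
  by_cases h : 0 ≤ s ∧ s ≤ (tstar : ℤ) - 1
  · rw [if_pos h, if_neg (not_not_intro h)]
  · rw [if_neg h, if_pos h]

lemma mu_zero (mstar tstar : ℕ) (p : ℝ) (hts : tstar ≤ mstar) (μ0 : ℤ → ℝ) (t : ℕ) :
    chainDist mstar p (cutoffDecision tstar) μ0 (t+1) 0 = p * Bseq mstar tstar p μ0 t := by
  show ∑ s ∈ Finset.Icc (-1 : ℤ) (mstar : ℤ), _ = _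
  have key : ∀ s ∈ Finset.Icc (-1 : ℤ) (mstar : ℤ),
      Pd mstar p (cutoffDecision tstar) 0 s * chainDist mstar p (cutoffDecision tstar) μ0 t s
      = if 0 ≤ s ∧ s ≤ (tstar : ℤ) - 1 then 0
        else p * chainDist mstar p (cutoffDecision tstar) μ0 t s := by
    intro s hs
    have hs1 : -1 ≤ s := (Finset.mem_Icc.1 hs).1
    rw [Pd_cut mstar tstar p hts s hs1 0]
    by_cases h : 0 ≤ s ∧ s ≤ (tstar : ℤ) - 1
    · rw [if_pos h, if_pos h, if_neg (by omega : ¬ (0 : ℤ) = s + 1)]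
      ring
    · rw [if_neg h, if_neg h, if_neg (by omega : ¬ (0 : ℤ) = -1), if_pos rfl]
  rw [Finset.sum_congr rfl key]
  rw [Bseq, Finset.mul_sum, Finset.sum_filter]
  apply Finset.sum_congr rfl
  intro s _
  by_cases h : 0 ≤ s ∧ s ≤ (tstar : ℤ) - 1
  · rw [if_pos h, if_neg (not_not_intro h)]
  · rw [if_neg h, if_pos h]

lemma mu_pos (mstar tstar : ℕ) (p : ℝ) (hts : tstar ≤ mstar) (μ0 : ℤ → ℝ) (t : ℕ)
    (m : ℤ) (h1 : 1 ≤ m) (h2 : m ≤ (tstar : ℤ)) :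
    chainDist mstar p (cutoffDecision tstar) μ0 (t+1) m
      = chainDist mstar p (cutoffDecision tstar) μ0 t (m - 1) := by
  show ∑ s ∈ Finset.Icc (-1 : ℤ) (mstar : ℤ), _ = _
  have key : ∀ s ∈ Finset.Icc (-1 : ℤ) (mstar : ℤ),
      Pd mstar p (cutoffDecision tstar) m s * chainDist mstar p (cutoffDecision tstar) μ0 t s
      = if s = m - 1 then chainDist mstar p (cutoffDecision tstar) μ0 t (m - 1) else 0 := by
    intro s hs
    have hs1 : -1 ≤ s := (Finset.mem_Icc.1 hs).1
    rw [Pd_cut mstar tstar p hts s hs1 m]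
    by_cases hsm : s = m - 1
    · subst hsm
      rw [if_pos (by omega), if_pos (by omega : m = (m-1) + 1), if_pos rfl, one_mul]
    · rw [if_neg hsm]
      by_cases h : 0 ≤ s ∧ s ≤ (tstar : ℤ) - 1
      · rw [if_pos h, if_neg (by omega : ¬ m = s + 1), zero_mul]
      · rw [if_neg h, if_neg (by omega : ¬ m = -1), if_neg (by omega : ¬ m = 0), zero_mul]
  rw [Finset.sum_congr rfl key,
    Finset.sum_ite_eq' (Finset.Icc (-1:ℤ) (mstar:ℤ)) (m - 1)
      (fun _ => chainDist mstar p (cutoffDecision tstar) μ0 t (m - 1)),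
    if_pos (by rw [Finset.mem_Icc]; omega)]

lemma mu_big (mstar tstar : ℕ) (p : ℝ) (hts : tstar ≤ mstar) (μ0 : ℤ → ℝ) (t : ℕ)
    (m : ℤ) (h1 : (tstar : ℤ) < m) (h2 : m ≤ (mstar : ℤ)) :
    chainDist mstar p (cutoffDecision tstar) μ0 (t+1) m = 0 := by
  show ∑ s ∈ Finset.Icc (-1 : ℤ) (mstar : ℤ), _ = _
  apply Finset.sum_eq_zero
  intro s hs
  have hs1 : -1 ≤ s := (Finset.mem_Icc.1 hs).1
  rw [Pd_cut mstar tstar p hts s hs1 m]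
  by_cases h : 0 ≤ s ∧ s ≤ (tstar : ℤ) - 1
  · rw [if_pos h, if_neg (by omega : ¬ m = s + 1), zero_mul]
  · rw [if_neg h, if_neg (by omega : ¬ m = -1), if_neg (by omega : ¬ m = 0), zero_mul]

lemma mu_j (mstar tstar : ℕ) (p : ℝ) (hts : tstar ≤ mstar) (μ0 : ℤ → ℝ)
    (j : ℕ) (hj : j ≤ tstar) (t : ℕ) :
    chainDist mstar p (cutoffDecision tstar) μ0 (t + j + 1) (j : ℤ)
      = p * Bseq mstar tstar p μ0 t := by
  induction j with
  | zero => exact mu_zero mstar tstar p hts μ0 t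
  | succ j ih =>
    have e1 : t + (j+1) + 1 = (t + j + 1) + 1 := by omega
    have e2 : ((j+1 : ℕ) : ℤ) = (j : ℤ) + 1 := by push_cast; ring
    rw [e1, e2, mu_pos mstar tstar p hts μ0 _ ((j:ℤ)+1) (by omega) (by omega),
      add_sub_cancel_right]
    exact ih (by omega)

lemma B_rec (mstar tstar : ℕ) (p : ℝ) (hts : tstar ≤ mstar) (μ0 : ℤ → ℝ) (n : ℕ) :
    Bseq mstar tstar p μ0 (n + (tstar + 1))
      = (1 - p) * Bseq mstar tstar p μ0 (n + (tstar + 1) - 1) + p * Bseq mstar tstar p μ0 n := by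
  have e1 : n + (tstar + 1) = (n + tstar) + 1 := by omega
  have e2 : n + (tstar + 1) - 1 = n + tstar := by omega
  rw [e2, e1]
  -- Bseq (t+1) = μ(t+1)(-1) + μ(t+1)(tstar)
  set t := n + tstar with ht
  have hset : (Finset.Icc (-1 : ℤ) (mstar : ℤ)).filter (fun s => ¬(0 ≤ s ∧ s ≤ (tstar : ℤ) - 1))
      = insert (-1 : ℤ) (Finset.Icc (tstar : ℤ) (mstar : ℤ)) := by
    ext s
    simp only [Finset.mem_filter, Finset.mem_Icc, Finset.mem_insert]
    omega
  have hnotmem : (-1 : ℤ) ∉ Finset.Icc (tstar : ℤ) (mstar : ℤ) := by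
    rw [Finset.mem_Icc]; omega
  have hsplit : Bseq mstar tstar p μ0 (t+1)
      = chainDist mstar p (cutoffDecision tstar) μ0 (t+1) (-1)
        + chainDist mstar p (cutoffDecision tstar) μ0 (t+1) (tstar : ℤ) := by
    rw [Bseq, hset, Finset.sum_insert hnotmem]
    congr 1
    apply Finset.sum_eq_single_of_mem (tstar : ℤ) (by rw [Finset.mem_Icc]; omega)
    intro m hm hne
    have := Finset.mem_Icc.1 hm
    exact mu_big mstar tstar p hts μ0 t m (by omega) (by omega)
  rw [hsplit, mu_neg1 mstar tstar p hts μ0 t, ht, mu_j mstar tstar p hts μ0 tstar le_rfl n]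

lemma core_conv (p : ℝ) (hp0 : 0 < p) (hp1 : p < 1) (k : ℕ) (hk : 1 ≤ k) (b : ℕ → ℝ)
    (hb0 : ∀ n, 0 ≤ b n) (hb1 : ∀ n, b n ≤ 1)
    (hrec : ∀ n, b (n + k) = (1 - p) * b (n + k - 1) + p * b n) :
    ∃ L, Tendsto b atTop (nhds L) := by
  have hne : (Finset.range k).Nonempty := ⟨0, Finset.mem_range.2 hk⟩
  set M : ℕ → ℝ := fun n => (Finset.range k).sup' hne (fun i => b (n + i)) with hM
  set m : ℕ → ℝ := fun n => (Finset.range k).inf' hne (fun i => b (n + i)) with hm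
  have hp0' : (0:ℝ) ≤ 1 - p := by linarith
  -- all later values bounded by window sup/inf
  have up : ∀ n j, b (n + j) ≤ M n := by
    intro n j
    induction j using Nat.strong_induction_on with
    | _ j ih =>
      rcases lt_or_ge j k with hj | hj
      · exact Finset.le_sup' (fun i => b (n + i)) (Finset.mem_range.2 hj)
      · have h1 : n + j = (n + (j - k)) + k := by omega
        have h2 : (n + (j - k)) + k - 1 = n + (j - 1) := by omega
        rw [h1, hrec, h2]
        have i1 := ih (j-1) (by omega)
        have i2 := ih (j-k) (by omega)
        nlinarith
  have low : ∀ n j, m n ≤ b (n + j) := by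
    intro n j
    induction j using Nat.strong_induction_on with
    | _ j ih =>
      rcases lt_or_ge j k with hj | hj
      · exact Finset.inf'_le (fun i => b (n + i)) (Finset.mem_range.2 hj)
      · have h1 : n + j = (n + (j - k)) + k := by omega
        have h2 : (n + (j - k)) + k - 1 = n + (j - 1) := by omega
        rw [h1, hrec, h2]
        have i1 := ih (j-1) (by omega)
        have i2 := ih (j-k) (by omega)
        nlinarith
  have Mle : ∀ n n', n ≤ n' → M n' ≤ M n := by
    intro n n' h
    apply Finset.sup'_le
    intro i hi
    have : n' + i = n + ((n' - n) + i) := by omega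
    rw [this]; exact up n _
  have mle : ∀ n n', n ≤ n' → m n ≤ m n' := by
    intro n n' h
    apply Finset.le_inf'
    intro i hi
    have : n' + i = n + ((n' - n) + i) := by omega
    rw [this]; exact low n _
  have mleM : ∀ n, m n ≤ M n := fun n => le_trans (low n 0) (up n 0)
  set δ : ℝ := p * (1 - p) ^ (k - 1) with hδ
  have hδ0 : 0 < δ := mul_pos hp0 (pow_pos (by linarith) _)
  have hδ1 : δ < 1 := by
    have : (1 - p) ^ (k - 1) ≤ 1 := pow_le_one₀ hp0' (by linarith)
    nlinarith
  -- oscillation contraction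
  have contr : ∀ n, M (n + (2 * k - 1)) - m (n + (2 * k - 1)) ≤ (1 - δ) * (M n - m n) := by
    intro n
    obtain ⟨j0, hj0mem, hj0⟩ := Finset.exists_mem_eq_inf' hne (fun i => b (n + i))
    have hj0k : j0 < k := Finset.mem_range.1 hj0mem
    -- propagation
    have prop : ∀ i, i < k → b (n + j0 + k + i) ≤ M n - p * (1 - p) ^ i * (M n - m n) := by
      intro i hi
      induction i with
      | zero =>
        simp only [Nat.add_zero, pow_zero]
        have h2 : n + j0 + k - 1 = n + (j0 + k - 1) := by omega
        rw [hrec, h2]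
        have i1 := up n (j0 + k - 1)
        have i2 : b (n + j0) = m n := hj0.symm
        rw [i2]
        nlinarith [mleM n]
      | succ i ih =>
        have ih' := ih (by omega)
        have h1 : n + j0 + k + (i+1) = (n + (j0 + i + 1)) + k := by omega
        have h2 : (n + (j0 + i + 1)) + k - 1 = n + j0 + k + i := by omega
        rw [h1, hrec, h2]
        have i2 := up n (j0 + i + 1)
        have e : (1-p) ^ (i+1) = (1-p) * (1-p)^i := by ring
        rw [e]
        nlinarith [mleM n]
    have hMstep : M (n + j0 + k) ≤ M n - δ * (M n - m n) := by
      apply Finset.sup'_le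
      intro i hi
      have hi' : i < k := Finset.mem_range.1 hi
      have := prop i hi'
      have hpow : (1-p)^(k-1) ≤ (1-p)^i := pow_le_pow_of_le_one hp0' (by linarith) (by omega)
      have hOsc : 0 ≤ M n - m n := by linarith [mleM n]
      calc b (n + j0 + k + i) ≤ M n - p * (1 - p) ^ i * (M n - m n) := this
        _ ≤ M n - δ * (M n - m n) := by
            have hmul : δ * (M n - m n) ≤ p * (1 - p) ^ i * (M n - m n) := by
              rw [hδ]
              exact mul_le_mul_of_nonneg_right (mul_le_mul_of_nonneg_left hpow hp0.le) hOsc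
            linarith
    have h3 : M (n + (2*k - 1)) ≤ M (n + j0 + k) := Mle _ _ (by omega)
    have h4 : m n ≤ m (n + (2*k-1)) := mle _ _ (by omega)
    nlinarith
  -- oscillation tends to 0
  set Osc : ℕ → ℝ := fun n => M n - m n with hOsc
  have hOsc0 : ∀ n, 0 ≤ Osc n := fun n => by simp [hOsc]; linarith [mleM n]
  have hOscanti : ∀ n n', n ≤ n' → Osc n' ≤ Osc n := fun n n' h => by
    have := Mle n n' h; have := mle n n' h; simp [hOsc]; linarith
  have hk2 : 1 ≤ 2 * k - 1 := by omega
  have geo : ∀ q, Osc (q * (2*k-1)) ≤ (1-δ)^q * Osc 0 := by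
    intro q
    induction q with
    | zero => simp
    | succ q ih =>
      have h1 : (q+1) * (2*k-1) = q * (2*k-1) + (2*k-1) := by ring
      rw [h1]
      calc Osc (q * (2*k-1) + (2*k-1)) ≤ (1-δ) * Osc (q * (2*k-1)) := contr _
        _ ≤ (1-δ) * ((1-δ)^q * Osc 0) := by nlinarith
        _ = (1-δ)^(q+1) * Osc 0 := by ring
  have hOsctend : Tendsto Osc atTop (nhds 0) := by
    have hbound : ∀ n, Osc n ≤ (1-δ)^(n / (2*k-1)) * Osc 0 := by
      intro n
      calc Osc n ≤ Osc ((n / (2*k-1)) * (2*k-1)) :=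
            hOscanti _ _ (Nat.div_mul_le_self n _)
        _ ≤ (1-δ)^(n / (2*k-1)) * Osc 0 := geo _
    have h1 : Tendsto (fun n : ℕ => (1-δ)^(n / (2*k-1)) * Osc 0) atTop (nhds 0) := by
      have hpow : Tendsto (fun q : ℕ => (1-δ)^q) atTop (nhds 0) :=
        tendsto_pow_atTop_nhds_zero_of_lt_one (by linarith) (by linarith)
      have hdiv : Tendsto (fun n : ℕ => n / (2*k-1)) atTop atTop := by
        apply tendsto_atTop_atTop.2
        intro N
        exact ⟨N * (2*k-1), fun n hn => Nat.le_div_iff_mul_le (by omega) |>.2 hn⟩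
      have := (hpow.comp hdiv).mul_const (Osc 0)
      simpa using this
    exact tendsto_of_tendsto_of_tendsto_of_le_of_le tendsto_const_nhds h1 hOsc0 hbound
  -- M converges
  have hMbdd : BddBelow (Set.range M) := by
    refine ⟨0, ?_⟩
    rintro x ⟨n, rfl⟩
    exact le_trans (hb0 (n+0)) (up n 0)
  have hManti : Antitone M := fun a b h => Mle a b h
  have hMtend : Tendsto M atTop (nhds (⨅ n, M n)) :=
    tendsto_atTop_ciInf hManti hMbdd
  set L := ⨅ n, M n
  refine ⟨L, ?_⟩
  have hmtend : Tendsto m atTop (nhds L) := by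
    have : m = fun n => M n - Osc n := by funext n; simp [hOsc]
    rw [this]
    simpa using hMtend.sub hOsctend
  exact tendsto_of_tendsto_of_tendsto_of_le_of_le hmtend hMtend
    (fun n => low n 0) (fun n => up n 0)

lemma B_bounds (mstar tstar : ℕ) (p : ℝ) (hts : tstar ≤ mstar) (hp0 : 0 < p) (hp1 : p < 1)
    (μ0 : ℤ → ℝ) (hμ0 : ValidInit mstar μ0) (t : ℕ) :
    0 ≤ Bseq mstar tstar p μ0 t ∧ Bseq mstar tstar p μ0 t ≤ 1 := by
  constructor
  · apply Finset.sum_nonneg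
    intro s hs
    exact mu_nonneg mstar tstar p hts hp0 hp1 μ0 hμ0 t s (Finset.mem_filter.1 hs).1
  · rw [← mu_sum_one mstar tstar p hts μ0 hμ0 t]
    apply Finset.sum_le_sum_of_subset_of_nonneg (Finset.filter_subset _ _)
    intro s hs _
    exact mu_nonneg mstar tstar p hts hp0 hp1 μ0 hμ0 t s hs

lemma mass_identity (mstar tstar : ℕ) (p : ℝ) (hts : tstar ≤ mstar)
    (μ0 : ℤ → ℝ) (hμ0 : ValidInit mstar μ0) (t : ℕ) :
    (1 - p) * Bseq mstar tstar p μ0 (t + tstar)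
      + ∑ m ∈ Finset.Icc (0 : ℤ) (tstar : ℤ), p * Bseq mstar tstar p μ0 (t + (tstar - m.toNat)) = 1 := by
  have hmass := mu_sum_one mstar tstar p hts μ0 hμ0 (t + tstar + 1)
  have hsetS : Finset.Icc (-1 : ℤ) (mstar : ℤ) = insert (-1 : ℤ) (Finset.Icc (0 : ℤ) (mstar : ℤ)) := by
    ext s; simp only [Finset.mem_Icc, Finset.mem_insert]; omega
  have hnm : (-1 : ℤ) ∉ Finset.Icc (0 : ℤ) (mstar : ℤ) := by rw [Finset.mem_Icc]; omega
  have hset2 : Finset.Icc (0 : ℤ) (mstar : ℤ)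
      = Finset.Icc (0 : ℤ) (tstar : ℤ) ∪ Finset.Icc ((tstar : ℤ) + 1) (mstar : ℤ) := by
    ext s; simp only [Finset.mem_Icc, Finset.mem_union]; omega
  have hdisj : Disjoint (Finset.Icc (0 : ℤ) (tstar : ℤ)) (Finset.Icc ((tstar : ℤ) + 1) (mstar : ℤ)) := by
    rw [Finset.disjoint_left]
    intro a ha hb
    rw [Finset.mem_Icc] at ha hb
    omega
  rw [hsetS, Finset.sum_insert hnm, hset2, Finset.sum_union hdisj] at hmass
  have hzero : ∑ m ∈ Finset.Icc ((tstar : ℤ) + 1) (mstar : ℤ),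
      chainDist mstar p (cutoffDecision tstar) μ0 (t + tstar + 1) m = 0 := by
    apply Finset.sum_eq_zero
    intro m hm
    rw [Finset.mem_Icc] at hm
    exact mu_big mstar tstar p hts μ0 (t + tstar) m (by omega) (by omega)
  rw [hzero, add_zero, mu_neg1 mstar tstar p hts μ0 (t + tstar)] at hmass
  have hterm : ∀ m ∈ Finset.Icc (0 : ℤ) (tstar : ℤ),
      chainDist mstar p (cutoffDecision tstar) μ0 (t + tstar + 1) m
        = p * Bseq mstar tstar p μ0 (t + (tstar - m.toNat)) := by
    intro m hm
    rw [Finset.mem_Icc] at hm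
    have hmn : m.toNat ≤ tstar := by omega
    have e1 : t + tstar + 1 = (t + (tstar - m.toNat)) + m.toNat + 1 := by omega
    have e2 : (m.toNat : ℤ) = m := by omega
    have h := mu_j mstar tstar p hts μ0 m.toNat hmn (t + (tstar - m.toNat))
    rw [e2, ← e1] at h
    exact h
  rw [Finset.sum_congr rfl hterm] at hmass
  exact hmass

/-- **Steady-state values of the memory-cutoff policy**: for any initial distribution,
`lim_{t→∞} F̃^{t*}(t) = (p/(1+t*p)) ∑_{m=0}^{t*} f(m)` and
`lim_{t→∞} X^{t*}(t) = (t*+1)p/(1+t*p)`. -/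
theorem memory_cutoff_steady_state (mstar : ℕ) (p : ℝ) (hp0 : 0 < p) (hp1 : p < 1)
    (tstar : ℕ) (hts : tstar ≤ mstar)
    (f : ℤ → ℝ) (hf : f (-1) = 0)
    (μ0 : ℤ → ℝ) (hμ0 : ValidInit mstar μ0) :
    Tendsto (Ftil mstar p (cutoffDecision tstar) μ0 f) atTop
      (nhds (p / (1 + tstar * p) * ∑ m ∈ Finset.Icc (0 : ℤ) (tstar : ℤ), f m)) ∧
    Tendsto (fun t => 1 - chainDist mstar p (cutoffDecision tstar) μ0 t (-1)) atTop
      (nhds ((tstar + 1) * p / (1 + tstar * p))) := by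
  -- convergence of Bseq
  obtain ⟨L, hL⟩ := core_conv p hp0 hp1 (tstar + 1) (by omega) (Bseq mstar tstar p μ0)
    (fun n => (B_bounds mstar tstar p hts hp0 hp1 μ0 hμ0 n).1)
    (fun n => (B_bounds mstar tstar p hts hp0 hp1 μ0 hμ0 n).2)
    (fun n => B_rec mstar tstar p hts μ0 n)
  have hden : (0:ℝ) < 1 + (tstar : ℝ) * p := by positivity
  have hshift_add : ∀ c : ℕ, Tendsto (fun t => Bseq mstar tstar p μ0 (t + c)) atTop (nhds L) :=
    fun c => hL.comp (tendsto_add_atTop_nat c)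
  have hshift_sub : ∀ c : ℕ, Tendsto (fun t => Bseq mstar tstar p μ0 (t - c)) atTop (nhds L) :=
    fun c => hL.comp (tendsto_sub_atTop_nat c)
  -- identify L
  have hgL : Tendsto (fun t => (1 - p) * Bseq mstar tstar p μ0 (t + tstar)
      + ∑ m ∈ Finset.Icc (0 : ℤ) (tstar : ℤ), p * Bseq mstar tstar p μ0 (t + (tstar - m.toNat)))
      atTop (nhds ((1 - p) * L + ∑ m ∈ Finset.Icc (0 : ℤ) (tstar : ℤ), p * L)) := by
    apply Tendsto.add
    · exact (hshift_add tstar).const_mul (1 - p)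
    · exact tendsto_finset_sum _ (fun m _ => (hshift_add (tstar - m.toNat)).const_mul p)
  have hg1 : Tendsto (fun t => (1 - p) * Bseq mstar tstar p μ0 (t + tstar)
      + ∑ m ∈ Finset.Icc (0 : ℤ) (tstar : ℤ), p * Bseq mstar tstar p μ0 (t + (tstar - m.toNat)))
      atTop (nhds 1) := by
    apply tendsto_const_nhds.congr
    intro t
    exact (mass_identity mstar tstar p hts μ0 hμ0 t).symm
  have heq : (1 - p) * L + ∑ m ∈ Finset.Icc (0 : ℤ) (tstar : ℤ), p * L = 1 :=
    tendsto_nhds_unique hgL hg1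
  have hcard : (Finset.Icc (0 : ℤ) (tstar : ℤ)).card = tstar + 1 := by
    rw [Int.card_Icc]; omega
  rw [Finset.sum_const, hcard] at heq
  have hLval : L = 1 / (1 + (tstar : ℝ) * p) := by
    rw [eq_div_iff hden.ne']
    push_cast at heq
    ring_nf at heq ⊢
    linarith
  constructor
  · -- Ftil part
    have hT : Tendsto (fun t => ∑ m ∈ Finset.Icc (0 : ℤ) (tstar : ℤ),
        f m * (p * Bseq mstar tstar p μ0 (t - (1 + m.toNat)))) atTop
        (nhds (∑ m ∈ Finset.Icc (0 : ℤ) (tstar : ℤ), f m * (p * L))) :=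
      tendsto_finset_sum _ (fun m _ => ((hshift_sub (1 + m.toNat)).const_mul p).const_mul (f m))
    have hval : ∑ m ∈ Finset.Icc (0 : ℤ) (tstar : ℤ), f m * (p * L)
        = p / (1 + tstar * p) * ∑ m ∈ Finset.Icc (0 : ℤ) (tstar : ℤ), f m := by
      rw [hLval, Finset.mul_sum]
      apply Finset.sum_congr rfl
      intro m _
      field_simp
    rw [hval] at hT
    apply hT.congr'
    filter_upwards [Filter.eventually_ge_atTop (tstar + 1)] with t ht
    rw [Ftil]
    have hset2 : Finset.Icc (0 : ℤ) (mstar : ℤ)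
        = Finset.Icc (0 : ℤ) (tstar : ℤ) ∪ Finset.Icc ((tstar : ℤ) + 1) (mstar : ℤ) := by
      ext s; simp only [Finset.mem_Icc, Finset.mem_union]; omega
    have hdisj : Disjoint (Finset.Icc (0 : ℤ) (tstar : ℤ)) (Finset.Icc ((tstar : ℤ) + 1) (mstar : ℤ)) := by
      rw [Finset.disjoint_left]
      intro a ha hb
      rw [Finset.mem_Icc] at ha hb
      omega
    rw [hset2, Finset.sum_union hdisj]
    have hzero : ∑ m ∈ Finset.Icc ((tstar : ℤ) + 1) (mstar : ℤ),
        f m * chainDist mstar p (cutoffDecision tstar) μ0 t m = 0 := by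
      apply Finset.sum_eq_zero
      intro m hm
      rw [Finset.mem_Icc] at hm
      have e1 : t = (t - 1) + 1 := by omega
      rw [e1, mu_big mstar tstar p hts μ0 (t-1) m (by omega) (by omega), mul_zero]
    rw [hzero, add_zero]
    apply Finset.sum_congr rfl
    intro m hm
    rw [Finset.mem_Icc] at hm
    have hmn : m.toNat ≤ tstar := by omega
    have e1 : t = (t - (1 + m.toNat)) + m.toNat + 1 := by omega
    have e2 : (m.toNat : ℤ) = m := by omega
    have h := mu_j mstar tstar p hts μ0 m.toNat hmn (t - (1 + m.toNat))
    rw [e2, ← e1] at h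
    rw [h]
  · -- X part
    have hT : Tendsto (fun t => 1 - (1 - p) * Bseq mstar tstar p μ0 (t - 1)) atTop
        (nhds (1 - (1 - p) * L)) := tendsto_const_nhds.sub ((hshift_sub 1).const_mul (1 - p))
    have hval : 1 - (1 - p) * L = ((tstar : ℝ) + 1) * p / (1 + tstar * p) := by
      rw [hLval]
      field_simp
      ring
    rw [hval] at hT
    apply hT.congr'
    filter_upwards [Filter.eventually_ge_atTop 1] with t ht
    have e1 : t = (t - 1) + 1 := by omega
    rw [e1, mu_neg1 mstar tstar p hts μ0 (t-1)]
    simp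
end
end

section
/- Fidelity after GHZ entanglement swapping: for every n ≥ 1 and all two-qubit density matrices ρ₁ on A R₁¹, ρ₂ on R₁² R₂¹, …, ρ_n on R_{n−1}² R_n¹, ρ_{n+1} on R_n² B, the fidelity of the output of the GHZ entanglement swapping channel with the (n+2)-party GHZ state satisfies ⟨GHZ_{n+2}| L^{GHZ;n}(ρ₁ ⊗ ρ₂ ⊗ ⋯ ⊗ ρ_{n+1}) |GHZ_{n+2}⟩ = ∑_{z⃗ ∈ {0,1}^n} ⟨Φ^{z₁⊕⋯⊕z_n, 0}|ρ₁|Φ^{z₁⊕⋯⊕z_n, 0}⟩ · ∏_{j=1}^{n} ⟨Φ^{z_j,0}|ρ_{j+1}|Φ^{z_j,0}⟩, where ⊕ is addition mod 2. -/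
open BigOperators Matrix
open scoped ComplexOrder

noncomputable section

/-- A qubit, with the bit-flip arithmetic of `ZMod 2`. -/
abbrev Qb := ZMod 2

/-- The qubit Bell state vector `|Φ^{z,x}⟩ = (Z^z X^x ⊗ 1)|Φ⟩`. -/
def bellVec (z x : Qb) : Qb × Qb → ℂ :=
  fun jk => if jk.1 = jk.2 + x then ((-1 : ℂ)) ^ ((jk.1 * z).val) / (Real.sqrt 2 : ℂ) else 0

/-- The index of the total input system `A R₁¹ R₁² ⋯ R_n¹ R_n² B`:
the `j`-th middle factor is the pair `(R_{j+1}¹, R_{j+1}²)`. -/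
abbrev GIn (n : ℕ) := Qb × (Fin n → Qb × Qb) × Qb

/-- The index of the output system `A R₁¹ ⋯ R_n¹ B`. -/
abbrev GOut (n : ℕ) := Qb × (Fin n → Qb) × Qb

/-- The contraction map `K^x = ⟨x|₂ CNOT : ℂ² ⊗ ℂ² → ℂ²`, with the CNOT controlled
on the first factor. -/
def Kc (x : Qb) : Matrix Qb (Qb × Qb) ℂ :=
  Matrix.of fun r ct => if r = ct.1 ∧ x = ct.2 + ct.1 then 1 else 0

/-- The preceding measurement outcome `x_{j-1}` used for the correction `X^{x_{j-1}}`
on `R_j¹` (zero for the first node). -/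
def xprev (n : ℕ) (x : Fin n → Qb) (j : Fin n) : Qb :=
  if h : (j : ℕ) = 0 then 0 else x ⟨(j : ℕ) - 1, by have := j.isLt; omega⟩

/-- The last measurement outcome `x_n`, used for the correction `X^{x_n}` on `B`. -/
def xlast (n : ℕ) (x : Fin n → Qb) : Qb :=
  if h : 0 < n then x ⟨n - 1, by omega⟩ else 0

/-- The operator `P^{x⃗} = 1_A ⊗ K^{x₁} ⊗ (K^{x₂} X^{x₁}) ⊗ ⋯ ⊗ (K^{x_n} X^{x_{n-1}}) ⊗ X^{x_n}`. -/
def Pop (n : ℕ) (x : Fin n → Qb) : Matrix (GOut n) (GIn n) ℂ :=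
  Matrix.of fun o s =>
    (if o.1 = s.1 then 1 else 0)
      * (∏ j : Fin n, Kc (x j) (o.2.1 j) ((s.2.1 j).1 + xprev n x j, (s.2.1 j).2))
      * (if o.2.2 = s.2.2 + xlast n x then 1 else 0)

/-- The GHZ entanglement swapping channel `L^{GHZ;n}(ρ) = ∑_{x⃗} P^{x⃗} ρ (P^{x⃗})†`. -/
def ghzChannel (n : ℕ) (ρ : Matrix (GIn n) (GIn n) ℂ) : Matrix (GOut n) (GOut n) ℂ :=
  ∑ x : Fin n → Qb, Pop n x * ρ * (Pop n x)ᴴ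

/-- The `(n+2)`-qubit GHZ state vector `(|0⟩^{⊗(n+2)} + |1⟩^{⊗(n+2)})/√2`. -/
def ghzVec (n : ℕ) : GOut n → ℂ := fun o =>
  if o.1 = 0 ∧ (∀ j, o.2.1 j = 0) ∧ o.2.2 = 0 then ((Real.sqrt 2 : ℂ))⁻¹
  else if o.1 = 1 ∧ (∀ j, o.2.1 j = 1) ∧ o.2.2 = 1 then ((Real.sqrt 2 : ℂ))⁻¹
  else 0

/-- The left subsystem paired with `ρ_{i+1}`: `A` for `i = 0`, else `R_i²`. -/
def leftIdx (n : ℕ) (s : GIn n) (i : Fin (n + 1)) : Qb :=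
  if h : (i : ℕ) = 0 then s.1
  else (s.2.1 ⟨(i : ℕ) - 1, by have := i.isLt; omega⟩).2

/-- The right subsystem paired with `ρ_{i+1}`: `R_{i+1}¹` for `i < n`, else `B`. -/
def rightIdx (n : ℕ) (s : GIn n) (i : Fin (n + 1)) : Qb :=
  if h : (i : ℕ) < n then (s.2.1 ⟨(i : ℕ), h⟩).1 else s.2.2

/-- The tensor product `ρ₁ ⊗ ⋯ ⊗ ρ_{n+1}` with `ρ₁` on `A R₁¹`, `ρ_{j+1}` on
`R_j² R_{j+1}¹`, and `ρ_{n+1}` on `R_n² B`. -/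
def chainState (n : ℕ) (ρ : Fin (n + 1) → Matrix (Qb × Qb) (Qb × Qb) ℂ) :
    Matrix (GIn n) (GIn n) ℂ :=
  Matrix.of fun s s' =>
    ∏ i : Fin (n + 1), ρ i (leftIdx n s i, rightIdx n s i) (leftIdx n s' i, rightIdx n s' i)

/-- The fidelity `⟨ψ|ρ|ψ⟩` of a state `ρ` with a pure state `|ψ⟩`. -/
def fidTo {m' : Type*} [Fintype m'] (ψ : m' → ℂ) (ρ : Matrix m' m' ℂ) : ℂ :=
  ∑ i, ∑ j, (starRingEnd ℂ) (ψ i) * ρ i j * ψ j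

/-!
Both sides depend on each `ρᵢ` only through the two numbers
`diagCorr ρᵢ c = ∑ₐ ⟨aa|ρᵢ|(a+c)(a+c)⟩`, `c ∈ ℤ/2`. On the left, `(P^{x⃗})†` sends `|α⋯α⟩` to a
single product basis state, on which `ρᵢ` sees `|bb⟩` with `b = (0, x₁, …, x_n)ᵢ + α`; as `(x⃗, α)`
ranges over all choices these `b` range independently over `ℤ/2`, so the fidelity is
`½ ∑_c ∏ᵢ diagCorr ρᵢ c`. On the right, `⟨Φ^{z,0}|ρ|Φ^{z,0}⟩ = ½ ∑_c (-1)^{cz} diagCorr ρ c` is a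
Fourier transform on `ℤ/2`, and summing the product over `z⃗` is Fourier inversion.
-/

lemma Qb.eq_zero_or_eq_one : ∀ a : Qb, a = 0 ∨ a = 1 := by decide

lemma Qb.sum_univ_two {M : Type*} [AddCommMonoid M] (f : Qb → M) : ∑ a, f a = f 0 + f 1 := Fin.sum_univ_two f

def qbSign (a : Qb) : ℂ := (-1) ^ a.val

@[simp] lemma qbSign_zero : qbSign 0 = 1 := by simp [qbSign]

@[simp] lemma qbSign_one : qbSign 1 = -1 := by simp [qbSign, ZMod.val_one]

lemma conj_qbSign (a : Qb) : starRingEnd ℂ (qbSign a) = qbSign a := by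
  simp [qbSign]

lemma qbSign_add (a b : Qb) : qbSign (a + b) = qbSign a * qbSign b := by
  rcases Qb.eq_zero_or_eq_one a with rfl | rfl <;> rcases Qb.eq_zero_or_eq_one b with rfl | rfl <;>
    simp [show (1 + 1 : Qb) = 0 from rfl]

lemma qbSign_sum {ι : Type*} (s : Finset ι) (a : ι → Qb) :
    qbSign (∑ i ∈ s, a i) = ∏ i ∈ s, qbSign (a i) := by
  induction s using Finset.cons_induction with
  | empty => simp
  | cons i s hi ih => rw [Finset.sum_cons, Finset.prod_cons, qbSign_add, ih]

lemma sum_qbSign_mul_sum_qbSign_mul (f : Qb → ℂ) (c : Qb) :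
    ∑ t, qbSign (c * t) * ∑ b, qbSign (b * t) * f b = 2 * f c := by
  rcases Qb.eq_zero_or_eq_one c with rfl | rfl <;> simp [Qb.sum_univ_two] <;> ring

lemma sum_fourier_mul_prod_fourier (n : ℕ) (f : Fin (n + 1) → Qb → ℂ) :
    ∑ z : Fin n → Qb, (∑ c, qbSign (c * ∑ j, z j) * f 0 c)
        * ∏ j, ∑ c, qbSign (c * z j) * f j.succ c
      = 2 ^ n * ∑ c, ∏ i, f i c := by
  calc _ = ∑ z : Fin n → Qb, ∑ c, f 0 c
          * ∏ j, qbSign (c * z j) * ∑ b, qbSign (b * z j) * f j.succ b := by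
        refine Finset.sum_congr rfl fun z _ => ?_
        rw [Finset.sum_mul]
        refine Finset.sum_congr rfl fun c _ => ?_
        rw [Finset.mul_sum, qbSign_sum, Finset.prod_mul_distrib]
        ring
    _ = ∑ c, f 0 c * ∏ j : Fin n, ∑ t, qbSign (c * t) * ∑ b, qbSign (b * t) * f j.succ b := by
        rw [Finset.sum_comm]
        refine Finset.sum_congr rfl fun c _ => ?_
        rw [← Finset.mul_sum, Fintype.prod_sum]
    _ = 2 ^ n * ∑ c, ∏ i, f i c := by
        simp only [sum_qbSign_mul_sum_qbSign_mul]
        simp only [Finset.prod_mul_distrib, Finset.prod_const, Finset.card_univ, Fintype.card_fin,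
          Fin.prod_univ_succ, Finset.mul_sum]
        exact Finset.sum_congr rfl fun c _ => by ring

lemma inv_sqrt_two_mul_self : ((Real.sqrt 2 : ℂ))⁻¹ * ((Real.sqrt 2 : ℂ))⁻¹ = 2⁻¹ := by
  rw [← mul_inv, ← Complex.ofReal_mul, Real.mul_self_sqrt zero_le_two, Complex.ofReal_ofNat]

lemma fidTo_eq_dotProduct {ι : Type*} [Fintype ι] (ψ : ι → ℂ) (M : Matrix ι ι ℂ) :
    fidTo ψ M = star ψ ⬝ᵥ M *ᵥ ψ := by
  simp only [fidTo, dotProduct, mulVec, Finset.mul_sum, mul_assoc]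
  rfl

lemma fidTo_sum {ι κ : Type*} [Fintype ι] [Fintype κ] (ψ : ι → ℂ) (M : κ → Matrix ι ι ℂ) :
    fidTo ψ (∑ k, M k) = ∑ k, fidTo ψ (M k) := by
  simp only [fidTo_eq_dotProduct, sum_mulVec, dotProduct_sum]

lemma fidTo_mul_mul_conjTranspose {ι κ : Type*} [Fintype ι] [Fintype κ] (ψ : ι → ℂ)
    (A : Matrix ι κ ℂ) (M : Matrix κ κ ℂ) :
    fidTo ψ (A * M * Aᴴ) = fidTo (Aᴴ *ᵥ ψ) M := by
  rw [fidTo_eq_dotProduct, fidTo_eq_dotProduct, star_mulVec, conjTranspose_conjTranspose,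
    ← mulVec_mulVec, ← mulVec_mulVec, dotProduct_mulVec]

lemma fidTo_sum_smul_single {ι κ : Type*} [Fintype ι] [DecidableEq ι] [Fintype κ]
    (w : κ → ℂ) (f : κ → ι) (M : Matrix ι ι ℂ) :
    fidTo (∑ k, w k • Pi.single (f k) (1 : ℂ)) M
      = ∑ k, ∑ l, star (w k) * M (f k) (f l) * w l := by
  simp only [fidTo_eq_dotProduct, star_sum, star_smul, Pi.star_single, star_one, mulVec_sum,
    mulVec_smul, mulVec_single_one, dotProduct_sum, sum_dotProduct, dotProduct_smul,
    smul_dotProduct, single_dotProduct, col_apply, one_mul, smul_eq_mul, Finset.mul_sum]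
  rw [Finset.sum_comm]
  exact Finset.sum_congr rfl fun k _ => Finset.sum_congr rfl fun l _ => by ring

def diagCorr (M : Matrix (Qb × Qb) (Qb × Qb) ℂ) (c : Qb) : ℂ := ∑ a, M (a, a) (a + c, a + c)

lemma bellVec_eq_sum (z : Qb) :
    bellVec z 0 = ∑ a, ((Real.sqrt 2 : ℂ)⁻¹ * qbSign (a * z)) • Pi.single (a, a) (1 : ℂ) := by
  funext ⟨j, k⟩
  rcases Qb.eq_zero_or_eq_one j with rfl | rfl <;> rcases Qb.eq_zero_or_eq_one k with rfl | rfl <;>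
    simp [bellVec, Qb.sum_univ_two, qbSign, div_eq_mul_inv, Pi.single_apply, mul_comm]

lemma fidTo_bellVec (z : Qb) (M : Matrix (Qb × Qb) (Qb × Qb) ℂ) :
    fidTo (bellVec z 0) M = 2⁻¹ * ∑ c, qbSign (c * z) * diagCorr M c := by
  rw [bellVec_eq_sum, fidTo_sum_smul_single]
  simp only [diagCorr, Finset.mul_sum]
  conv_rhs => rw [Finset.sum_comm]
  refine Finset.sum_congr rfl fun a _ => ?_
  rw [← Equiv.sum_comp (Equiv.addLeft a)]
  refine Finset.sum_congr rfl fun c _ => ?_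
  have hsign : qbSign (a * z) * qbSign ((a + c) * z) = qbSign (c * z) := by
    rw [← qbSign_add, ← add_mul, CharTwo.add_cancel_left]
  simp only [Equiv.coe_addLeft, Complex.star_def, map_mul, map_inv₀, Complex.conj_ofReal,
    conj_qbSign]
  linear_combination
    (qbSign (a * z) * qbSign ((a + c) * z) * M (a, a) (a + c, a + c)) * inv_sqrt_two_mul_self
    + (2⁻¹ * M (a, a) (a + c, a + c)) * hsign

def constOut (n : ℕ) (α : Qb) : GOut n := (α, fun _ => α, α)

def swapIn (n : ℕ) (x : Fin n → Qb) (α : Qb) : GIn n :=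
  (α, fun j => (xprev n x j + α, x j + α), xlast n x + α)

lemma ghzVec_eq_sum (n : ℕ) :
    ghzVec n = ∑ α, ((Real.sqrt 2 : ℂ))⁻¹ • Pi.single (constOut n α) (1 : ℂ) := by
  funext o
  simp only [ghzVec, Finset.sum_apply, Pi.smul_apply, Pi.single_apply, smul_eq_mul,
    Qb.sum_univ_two, constOut, Prod.ext_iff, funext_iff]
  split_ifs <;> simp_all

lemma Kc_apply_add (x r p q d : Qb) :
    Kc x r (p + d, q) = if (p, q) = (d + r, x + r) then 1 else 0 := by
  simp only [Kc, of_apply]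
  congr 1
  revert x r p q d
  decide

lemma Pop_constOut_apply (n : ℕ) (x : Fin n → Qb) (α : Qb) (s : GIn n) :
    Pop n x (constOut n α) s = if s = swapIn n x α then 1 else 0 := by
  obtain ⟨a, m, b⟩ := s
  simp only [Pop, constOut, swapIn, of_apply, Kc_apply_add, Finset.prod_boole, Finset.mem_univ,
    forall_const, ite_zero_mul_ite_zero, mul_one]
  congr 1
  have hB : α = b + xlast n x ↔ b = xlast n x + α := by
    generalize xlast n x = l
    revert α b l
    decide
  simp only [hB, Prod.ext_iff, funext_iff, eq_comm (a := α), and_assoc]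

lemma conjTranspose_Pop_mulVec_single (n : ℕ) (x : Fin n → Qb) (α : Qb) :
    (Pop n x)ᴴ *ᵥ Pi.single (constOut n α) 1 = Pi.single (swapIn n x α) 1 := by
  funext s
  simp [Pop_constOut_apply, Pi.single_apply]

lemma fidTo_ghzVec_conj_Pop (n : ℕ) (x : Fin n → Qb) (M : Matrix (GIn n) (GIn n) ℂ) :
    fidTo (ghzVec n) (Pop n x * M * (Pop n x)ᴴ)
      = 2⁻¹ * ∑ α, ∑ β, M (swapIn n x α) (swapIn n x β) := by
  simp only [fidTo_mul_mul_conjTranspose, ghzVec_eq_sum, mulVec_sum, mulVec_smul,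
    conjTranspose_Pop_mulVec_single, fidTo_sum_smul_single, Complex.star_def, map_inv₀,
    Complex.conj_ofReal, Finset.mul_sum]
  exact Finset.sum_congr rfl fun α _ => Finset.sum_congr rfl fun β _ => by
    rw [← inv_sqrt_two_mul_self]; ring

lemma xprev_eq_cons (n : ℕ) (x : Fin n → Qb) (j : Fin n) :
    xprev n x j = (Fin.cons 0 x : Fin (n + 1) → Qb) j.castSucc := by
  rcases j with ⟨_ | k, hk⟩ <;> rfl

lemma xlast_eq_cons (n : ℕ) (x : Fin n → Qb) :
    xlast n x = (Fin.cons 0 x : Fin (n + 1) → Qb) (Fin.last n) := by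
  cases n <;> rfl

lemma leftIdx_swapIn (n : ℕ) (x : Fin n → Qb) (α : Qb) (i : Fin (n + 1)) :
    leftIdx n (swapIn n x α) i = (Fin.cons 0 x : Fin (n + 1) → Qb) i + α := by
  induction i using Fin.cases with
  | zero => simp [leftIdx, swapIn]
  | succ j => simp [leftIdx, swapIn]

lemma rightIdx_swapIn (n : ℕ) (x : Fin n → Qb) (α : Qb) (i : Fin (n + 1)) :
    rightIdx n (swapIn n x α) i = (Fin.cons 0 x : Fin (n + 1) → Qb) i + α := by
  induction i using Fin.lastCases with
  | last => simp [rightIdx, swapIn, xlast_eq_cons]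
  | cast j => simp [rightIdx, swapIn, xprev_eq_cons]

lemma chainState_swapIn (n : ℕ) (ρ : Fin (n + 1) → Matrix (Qb × Qb) (Qb × Qb) ℂ)
    (x : Fin n → Qb) (α β : Qb) :
    chainState n ρ (swapIn n x α) (swapIn n x β)
      = ∏ i, let a := (Fin.cons 0 x : Fin (n + 1) → Qb) i
          ρ i (a + α, a + α) (a + β, a + β) := by
  simp only [chainState, of_apply, leftIdx_swapIn, rightIdx_swapIn]

lemma sum_sum_prod_cons_add {G R : Type*} [AddGroup G] [Fintype G] [CommSemiring R] (n : ℕ)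
    (g : Fin (n + 1) → G → R) :
    ∑ x : Fin n → G, ∑ α, ∏ i, g i ((Fin.cons 0 x : Fin (n + 1) → G) i + α)
      = ∏ i, ∑ b, g i b := by
  rw [Finset.sum_comm, Fin.prod_univ_succ, Finset.sum_mul]
  refine Finset.sum_congr rfl fun α _ => ?_
  simp only [Fin.prod_univ_succ, Fin.cons_zero, Fin.cons_succ, zero_add, ← Finset.mul_sum]
  rw [Fintype.prod_sum, ← Equiv.sum_comp (Equiv.subRight fun _ => α)]
  simp only [Equiv.subRight_apply, Pi.sub_apply, sub_add_cancel]

lemma fidTo_ghzVec_ghzChannel_chainState (n : ℕ)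
    (ρ : Fin (n + 1) → Matrix (Qb × Qb) (Qb × Qb) ℂ) :
    fidTo (ghzVec n) (ghzChannel n (chainState n ρ)) = 2⁻¹ * ∑ c, ∏ i, diagCorr (ρ i) c := by
  rw [ghzChannel, fidTo_sum]
  simp only [fidTo_ghzVec_conj_Pop, chainState_swapIn, ← Finset.mul_sum]
  congr 1
  calc _ = ∑ x : Fin n → Qb, ∑ α : Qb, ∑ c : Qb, ∏ i,
          let a := (Fin.cons 0 x : Fin (n + 1) → Qb) i + α
          ρ i (a, a) (a + c, a + c) := by
        refine Finset.sum_congr rfl fun x _ => Finset.sum_congr rfl fun α _ => ?_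
        exact (Fintype.sum_equiv (Equiv.addLeft α) _ _ fun c => by
          simp only [Equiv.coe_addLeft, add_assoc]).symm
    _ = ∑ c, ∏ i, diagCorr (ρ i) c := by
        rw [Finset.sum_congr rfl fun x _ => Finset.sum_comm, Finset.sum_comm]
        exact Finset.sum_congr rfl fun c _ =>
          sum_sum_prod_cons_add n fun i b => ρ i (b, b) (b + c, b + c)

theorem fidelity_after_ghz_entanglement_swapping_general (n : ℕ)
    (ρ : Fin (n + 1) → Matrix (Qb × Qb) (Qb × Qb) ℂ) :
    fidTo (ghzVec n) (ghzChannel n (chainState n ρ))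
      = ∑ z : Fin n → Qb,
          fidTo (bellVec (∑ j, z j) 0) (ρ 0)
            * ∏ j : Fin n, fidTo (bellVec (z j) 0) (ρ j.succ) := by
  simp only [fidTo_ghzVec_ghzChannel_chainState, fidTo_bellVec, Finset.prod_mul_distrib,
    Finset.prod_const, Finset.card_univ, Fintype.card_fin, mul_mul_mul_comm, ← Finset.mul_sum]
  rw [sum_fourier_mul_prod_fourier n fun i => diagCorr (ρ i), mul_assoc, inv_pow,
    inv_mul_cancel_left₀ (pow_ne_zero n two_ne_zero)]

/-- **Fidelity after GHZ entanglement swapping** (Proposition 2 of the paper). -/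
theorem fidelity_after_ghz_entanglement_swapping (n : ℕ) (hn : 1 ≤ n)
    (ρ : Fin (n + 1) → Matrix (Qb × Qb) (Qb × Qb) ℂ)
    (hρ : ∀ i, (ρ i).PosSemidef ∧ (ρ i).trace = 1) :
    fidTo (ghzVec n) (ghzChannel n (chainState n ρ))
      = ∑ z : Fin n → Qb,
          fidTo (bellVec (∑ j, z j) 0) (ρ 0)
            * ∏ j : Fin n, fidTo (bellVec (z j) 0) (ρ j.succ) :=
  fidelity_after_ghz_entanglement_swapping_general n ρ
end
end
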